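/- arXiv:2207.05673 — 5 statements merged into one kernel-verified Lean document; each statement's English description precedes it below -/
import Mathlib

section
/- Let n, k be positive integers with n > 2k, C > 0, ε > 0, and φ(x) = -C(|x|+ε)^{2-n/k} on ℝ^n \ {0}. Then the k-th elementary symmetric polynomial of the eigenvalues of D²φ(x) equals (1 + ε/|x|)^{k-1} · binom(n-1, k) · (ε/|x|) · (|x|+ε)^{-n} · (n/k - 2)^k · C^k; in particular it is strictly positive for every x ≠ 0. -/
open Finset

noncomputable def esymm {m : ℕ} (k : ℕ) (lam : Fin m → ℝ) : ℝ :=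
  ∑ s ∈ Finset.univ.powersetCard k, ∏ i ∈ s, lam i

noncomputable def esymmZ {m : ℕ} (k : ℤ) (lam : Fin m → ℝ) : ℝ :=
  if k < 0 then 0 else esymm k.toNat lam

noncomputable def esymmDel {m : ℕ} (k : ℕ) (lam : Fin m → ℝ) (a : Fin m) : ℝ :=
  ∑ s ∈ (Finset.univ.erase a).powersetCard k, ∏ i ∈ s, lam i

noncomputable def esymmDelZ {m : ℕ} (k : ℤ) (lam : Fin m → ℝ) (a : Fin m) : ℝ :=
  if k < 0 then 0 else esymmDel k.toNat lam a

noncomputable def esymmDel2 {m : ℕ} (k : ℕ) (lam : Fin m → ℝ) (a b : Fin m) : ℝ :=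
  ∑ s ∈ ((Finset.univ.erase a).erase b).powersetCard k, ∏ i ∈ s, lam i

noncomputable def esymmDel2Z {m : ℕ} (k : ℤ) (lam : Fin m → ℝ) (a b : Fin m) : ℝ :=
  if k < 0 then 0 else esymmDel2 k.toNat lam a b

noncomputable def Smat {n : ℕ} (k : ℕ) (A : Matrix (Fin n) (Fin n) ℝ) : ℝ :=
  ∑ s ∈ Finset.univ.powersetCard k,
    (A.submatrix (Subtype.val : {i : Fin n // i ∈ s} → Fin n)
      (Subtype.val : {i : Fin n // i ∈ s} → Fin n)).det

noncomputable def SkDeriv {n : ℕ} (k : ℕ) (A : Matrix (Fin n) (Fin n) ℝ) (i j : Fin n) : ℝ :=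
  deriv (fun t : ℝ => Smat k (A + t • Matrix.single i j 1)) 0

noncomputable def hess {n : ℕ} (f : EuclideanSpace ℝ (Fin n) → ℝ)
    (x : EuclideanSpace ℝ (Fin n)) : Matrix (Fin n) (Fin n) ℝ :=
  fun i j => iteratedFDeriv ℝ 2 f x ![EuclideanSpace.single i 1, EuclideanSpace.single j 1]

noncomputable def eigMultiset {n : ℕ} (A : Matrix (Fin n) (Fin n) ℝ) : Multiset ℝ :=
  A.charpoly.roots

open Topology Matrix

noncomputable def hf (C ε p : ℝ) : ℝ → ℝ := fun s => -C * (Real.sqrt s + ε) ^ p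

noncomputable def hf' (C ε p : ℝ) : ℝ → ℝ := fun s =>
  (-C * p) * (Real.sqrt s + ε) ^ (p - 1) * (2 * Real.sqrt s)⁻¹

noncomputable def hf'' (C ε p : ℝ) : ℝ → ℝ := fun s =>
  (-C * p) * (((p - 1) * (Real.sqrt s + ε) ^ (p - 2) * (1 / (2 * Real.sqrt s))) *
      (2 * Real.sqrt s)⁻¹ +
    (Real.sqrt s + ε) ^ (p - 1) * (-(2 * (1 / (2 * Real.sqrt s))) / (2 * Real.sqrt s) ^ 2))

lemma hasDerivAt_hf {C ε p s : ℝ} (hε : 0 < ε) (hs : 0 < s) :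
    HasDerivAt (hf C ε p) (hf' C ε p s) s := by
  have hsq : HasDerivAt Real.sqrt (1 / (2 * Real.sqrt s)) s := Real.hasDerivAt_sqrt hs.ne'
  have hbase : (0:ℝ) < Real.sqrt s + ε := by positivity
  have h1 : HasDerivAt (fun t : ℝ => Real.sqrt t + ε) (1 / (2 * Real.sqrt s)) s :=
    hsq.add_const ε
  have h2 : HasDerivAt (fun t : ℝ => t ^ p) (p * (Real.sqrt s + ε) ^ (p - 1))
      (Real.sqrt s + ε) := Real.hasDerivAt_rpow_const (Or.inl hbase.ne')
  have h3 : HasDerivAt (hf C ε p) _ s := (h2.comp s h1).const_mul (-C)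
  convert h3 using 1
  simp [hf']; ring
lemma hasDerivAt_hf' {C ε p s : ℝ} (hε : 0 < ε) (hs : 0 < s) :
    HasDerivAt (hf' C ε p) (hf'' C ε p s) s := by
  have hsq : HasDerivAt Real.sqrt (1 / (2 * Real.sqrt s)) s := Real.hasDerivAt_sqrt hs.ne'
  have hsqpos : (0:ℝ) < Real.sqrt s := Real.sqrt_pos.2 hs
  have hbase : (0:ℝ) < Real.sqrt s + ε := by positivity
  have h1 : HasDerivAt (fun t : ℝ => Real.sqrt t + ε) (1 / (2 * Real.sqrt s)) s :=
    hsq.add_const ε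
  have h2 : HasDerivAt (fun t : ℝ => t ^ (p-1)) ((p-1) * (Real.sqrt s + ε) ^ (p - 2))
      (Real.sqrt s + ε) := by
    have := Real.hasDerivAt_rpow_const (x := Real.sqrt s + ε) (p := p-1) (Or.inl hbase.ne')
    convert this using 2; ring
  have hu : HasDerivAt (fun t : ℝ => (Real.sqrt t + ε) ^ (p-1))
      ((p-1) * (Real.sqrt s + ε) ^ (p - 2) * (1 / (2 * Real.sqrt s))) s := by
    have := h2.comp s h1; exact this
  have hw0 : HasDerivAt (fun t : ℝ => 2 * Real.sqrt t) (2 * (1 / (2 * Real.sqrt s))) s :=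
    hsq.const_mul 2
  have hw : HasDerivAt (fun t : ℝ => (2 * Real.sqrt t)⁻¹)
      (-(2 * (1 / (2 * Real.sqrt s))) / (2 * Real.sqrt s) ^ 2) s := by
    exact hw0.inv (by positivity)
  have := ((hu.mul hw).const_mul (-C * p))
  refine this.congr_of_eventuallyEq (Filter.Eventually.of_forall fun t => ?_)
  simp only [hf', Pi.mul_apply]; ring

example : True := trivial

lemma hess_eq {n : ℕ} (C ε p : ℝ) (hε : 0 < ε)
    (φ : EuclideanSpace ℝ (Fin n) → ℝ)
    (hφ : ∀ y, φ y = -C * (‖y‖ + ε) ^ p)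
    (x : EuclideanSpace ℝ (Fin n)) (hx : x ≠ 0) (i j : Fin n) :
    hess φ x i j = (4 * hf'' C ε p (‖x‖^2)) * (x i * x j)
      + (2 * hf' C ε p (‖x‖^2)) * (if i = j then 1 else 0) := by
  classical
  have hr2 : (0:ℝ) < ‖x‖^2 := by
    have : ‖x‖ ≠ 0 := by simpa using hx
    positivity
  -- derivative of the squared norm
  have hq : ∀ y : EuclideanSpace ℝ (Fin n),
      HasFDerivAt (fun z : EuclideanSpace ℝ (Fin n) => (‖z‖:ℝ)^2)
        ((2:ℝ) • (innerSL ℝ y)) y := by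
    intro y
    have h0 := ((hasFDerivAt_id (𝕜 := ℝ) y).inner ℝ (hasFDerivAt_id y))
    have h : HasFDerivAt (fun z : EuclideanSpace ℝ (Fin n) =>
        (inner ℝ z z : ℝ)) ((2:ℝ) • (innerSL ℝ y)) y := by
      refine h0.congr_fderiv ?_
      refine ContinuousLinearMap.ext fun u => ?_
      simp [two_mul, mul_comm]
      exact real_inner_comm _ _
    simpa only [real_inner_self_eq_norm_sq] using h
  -- φ as a composition
  have hφc : φ = (hf C ε p) ∘ (fun z : EuclideanSpace ℝ (Fin n) => (‖z‖:ℝ)^2) := by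
    funext z
    simp [hφ z, hf, Real.sqrt_sq (norm_nonneg z)]
  -- first derivative of φ away from 0
  have hφG : ∀ y : EuclideanSpace ℝ (Fin n), y ≠ 0 →
      HasFDerivAt φ (hf' C ε p (‖y‖^2) • ((2:ℝ) • innerSL ℝ y)) y := by
    intro y hy
    have hs : (0:ℝ) < ‖y‖^2 := by
      have : ‖y‖ ≠ 0 := by simpa using hy
      positivity
    have h := (hasDerivAt_hf (C := C) (ε := ε) (p := p) hε hs).comp_hasFDerivAt y (hq y)
    rw [hφc]; exact h
  -- φ is C² at x
  have hC2 : ContDiffAt ℝ 2 φ x := by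
    rw [hφc]
    refine ContDiffAt.comp x ?_ (contDiff_norm_sq ℝ).contDiffAt
    have hsq : (0:ℝ) < Real.sqrt (‖x‖^2) := Real.sqrt_pos.2 hr2
    have h1 : ContDiffAt ℝ 2 (fun t : ℝ => (Real.sqrt t + ε) ^ p) (‖x‖^2) :=
      (Real.contDiffAt_rpow_const_of_ne (by positivity)).comp _
        ((Real.contDiffAt_sqrt hr2.ne').add (contDiffAt_const))
    have h2 := h1.const_smul (-C)
    exact h2.congr_of_eventuallyEq (Filter.Eventually.of_forall fun t => by
      simp [hf, smul_eq_mul])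
  have hdiff : DifferentiableAt ℝ (fderiv ℝ φ) x :=
    (hC2.fderiv_right (m := 1) (le_refl _)).differentiableAt one_ne_zero
  have h2a : hess φ x i j = fderiv ℝ (fderiv ℝ φ) x (EuclideanSpace.single i 1)
      (EuclideanSpace.single j 1) := by
    simp [hess, iteratedFDeriv_two_apply]
  have h2b : fderiv ℝ (fderiv ℝ φ) x (EuclideanSpace.single i 1) (EuclideanSpace.single j 1)
      = fderiv ℝ (fun y => fderiv ℝ φ y (EuclideanSpace.single j 1)) x
          (EuclideanSpace.single i 1) := by
    rw [fderiv_clm_apply hdiff (differentiableAt_const _)]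
    simp
  have hEq : (fun y => fderiv ℝ φ y (EuclideanSpace.single j 1)) =ᶠ[𝓝 x]
      (fun y => hf' C ε p (‖y‖^2) * ((2:ℝ) * y j)) := by
    filter_upwards [IsOpen.mem_nhds isOpen_compl_singleton hx] with y hy
    rw [(hφG y hy).fderiv]
    simp [EuclideanSpace.inner_single_right]
  have hcD : HasFDerivAt (fun y : EuclideanSpace ℝ (Fin n) => hf' C ε p (‖y‖^2))
      (hf'' C ε p (‖x‖^2) • ((2:ℝ) • innerSL ℝ x)) x :=
    by have := (hasDerivAt_hf' (C := C) (p := p) hε hr2).comp_hasFDerivAt x (hq x); exact this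
  have hdD : HasFDerivAt (fun y : EuclideanSpace ℝ (Fin n) => (2:ℝ) * y j)
      ((2:ℝ) • (EuclideanSpace.proj j : EuclideanSpace ℝ (Fin n) →L[ℝ] ℝ)) x :=
    (EuclideanSpace.proj j : EuclideanSpace ℝ (Fin n) →L[ℝ] ℝ).hasFDerivAt.const_mul (2:ℝ)
  have hmul : HasFDerivAt (fun y : EuclideanSpace ℝ (Fin n) => hf' C ε p (‖y‖^2) * ((2:ℝ) * y j)) _ x :=
    hcD.mul hdD
  rw [h2a, h2b, hEq.fderiv_eq, hmul.fderiv]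
  simp [EuclideanSpace.inner_single_right, EuclideanSpace.single_apply]
  rcases eq_or_ne i j with h | h
  · simp [h]; ring
  · simp [h, Ne.symm h]; ring

lemma card_filter_mem_powersetCard {n k : ℕ} (hk : 0 < k) (i : Fin n) :
    ((Finset.univ.powersetCard k).filter (fun s => i ∈ s)).card
      = (n-1).choose (k-1) := by
  classical
  have h : ((Finset.univ.powersetCard k).filter (fun s => i ∈ s)).card
      = ((Finset.univ.erase i).powersetCard (k-1)).card := by
    refine Finset.card_bij' (fun s _ => s.erase i) (fun t _ => insert i t) ?_ ?_ ?_ ?_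
    · intro s hs
      rw [Finset.mem_filter, Finset.mem_powersetCard] at hs
      rw [Finset.mem_powersetCard]
      exact ⟨Finset.erase_subset_erase i (Finset.subset_univ s),
        by rw [Finset.card_erase_of_mem hs.2, hs.1.2]⟩
    · intro t ht
      rw [Finset.mem_powersetCard] at ht
      have hit : i ∉ t := fun hmem => (Finset.ne_of_mem_erase (ht.1 hmem)) rfl
      rw [Finset.mem_filter, Finset.mem_powersetCard]
      exact ⟨⟨Finset.subset_univ _, by
        rw [Finset.card_insert_of_notMem hit, ht.2, Nat.sub_add_cancel hk]⟩,
        Finset.mem_insert_self i t⟩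
    · intro s hs
      rw [Finset.mem_filter] at hs
      exact Finset.insert_erase hs.2
    · intro t ht
      rw [Finset.mem_powersetCard] at ht
      have hit : i ∉ t := fun hmem => (Finset.ne_of_mem_erase (ht.1 hmem)) rfl
      exact Finset.erase_insert hit
  rw [h, Finset.card_powersetCard, Finset.card_erase_of_mem (Finset.mem_univ i),
    Finset.card_univ, Fintype.card_fin]

lemma sum_powersetCard_sum {n k : ℕ} (hk : 0 < k) (f : Fin n → ℝ) :
    ∑ s ∈ Finset.univ.powersetCard k, ∑ i ∈ s, f i
      = ((n-1).choose (k-1) : ℝ) * ∑ i, f i := by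
  classical
  have h1 : ∀ s ∈ Finset.univ.powersetCard k,
      ∑ i ∈ s, f i = ∑ i : Fin n, if i ∈ s then f i else 0 := by
    intro s _
    rw [Finset.sum_ite_mem, Finset.univ_inter]
  rw [Finset.sum_congr rfl h1, Finset.sum_comm]
  have h2 : ∀ i : Fin n, (∑ s ∈ Finset.univ.powersetCard k, if i ∈ s then f i else 0)
      = ((n-1).choose (k-1) : ℝ) * f i := by
    intro i
    rw [← Finset.sum_filter, Finset.sum_const, card_filter_mem_powersetCard hk i,
      nsmul_eq_mul]
  rw [Finset.sum_congr rfl (fun i _ => h2 i), ← Finset.mul_sum]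

lemma det_b_one_add_a_vv {ι : Type*} [Fintype ι] [DecidableEq ι] (k : ℕ) (hk : 0 < k)
    (hcard : Fintype.card ι = k) (a b : ℝ) (hb : b ≠ 0) (v : ι → ℝ) :
    (Matrix.of fun i j => a * v i * v j + b * (if i = j then 1 else 0)).det
      = b ^ k + a * b ^ (k-1) * ∑ i, v i ^ 2 := by
  obtain ⟨k', rfl⟩ : ∃ k', k = k' + 1 := ⟨k - 1, (Nat.succ_pred_eq_of_pos hk).symm⟩
  have hM : (Matrix.of fun i j => a * v i * v j + b * (if i = j then 1 else 0))
      = b • (1 + Matrix.replicateCol Unit ((a/b) • v) * Matrix.replicateRow Unit v) := by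
    ext i j
    rcases eq_or_ne i j with h | h
    · subst h
      simp [Matrix.one_apply, Matrix.mul_apply, Matrix.replicateCol, Matrix.replicateRow, smul_eq_mul]
      field_simp
      ring
    · simp [Matrix.one_apply, h, Matrix.mul_apply, Matrix.replicateCol, Matrix.replicateRow, smul_eq_mul]
      field_simp
  rw [hM, Matrix.det_smul, Matrix.det_one_add_replicateCol_mul_replicateRow, hcard]
  have hdp : v ⬝ᵥ ((a/b) • v) = (a/b) * ∑ i, v i ^ 2 := by
    simp [dotProduct, Finset.mul_sum, smul_eq_mul]
    exact Finset.sum_congr rfl fun i _ => by ring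
  rw [hdp]
  have : b ^ (k'+1) * (a/b) = a * b ^ k' := by field_simp; ring
  rw [mul_add, mul_one, ← mul_assoc, this]
  simp

lemma Smat_eq {n : ℕ} (k : ℕ) (hk : 0 < k) (a b : ℝ) (hb : b ≠ 0) (v : Fin n → ℝ)
    (A : Matrix (Fin n) (Fin n) ℝ)
    (hA : ∀ i j, A i j = a * v i * v j + b * (if i = j then 1 else 0)) :
    Smat k A = (n.choose k : ℝ) * b ^ k
      + ((n-1).choose (k-1) : ℝ) * (a * b ^ (k-1)) * ∑ i, v i ^ 2 := by
  classical
  unfold Smat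
  have hdet : ∀ s ∈ Finset.univ.powersetCard k,
      (A.submatrix (Subtype.val : {i : Fin n // i ∈ s} → Fin n)
        (Subtype.val : {i : Fin n // i ∈ s} → Fin n)).det
      = b ^ k + a * b ^ (k-1) * ∑ i ∈ s, v i ^ 2 := by
    intro s hs
    have hcard : Fintype.card {i : Fin n // i ∈ s} = k := by
      rw [Fintype.card_coe]
      exact (Finset.mem_powersetCard.mp hs).2
    have hsub : A.submatrix (Subtype.val : {i : Fin n // i ∈ s} → Fin n)
        (Subtype.val : {i : Fin n // i ∈ s} → Fin n)
        = Matrix.of (fun i j : {i : Fin n // i ∈ s} =>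
            a * (v i.val) * (v j.val) + b * (if i = j then 1 else 0)) := by
      ext i j
      rw [Matrix.submatrix_apply, hA]
      congr 2
      exact if_congr Subtype.ext_iff.symm rfl rfl
    rw [hsub, det_b_one_add_a_vv k hk hcard a b hb (fun i => v i.val)]
    congr 1
    rw [Finset.sum_coe_sort s (fun i => v i ^ 2), mul_assoc]
  rw [Finset.sum_congr rfl hdet, Finset.sum_add_distrib, Finset.sum_const,
    Finset.card_powersetCard, Finset.card_univ, Fintype.card_fin, nsmul_eq_mul,
    ← Finset.mul_sum, sum_powersetCard_sum hk]
  ring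

lemma final_algebra (m k' : ℕ) (hn : 2 * (k'+1) < m + 1) (C ε r : ℝ)
    (hC : 0 < C) (hε : 0 < ε) (hr : 0 < r) (p : ℝ)
    (hp : p = 2 - ((m+1:ℕ):ℝ) / ((k'+1:ℕ):ℝ)) :
    ((m+1).choose (k'+1) : ℝ) * (2 * hf' C ε p (r^2)) ^ (k'+1)
      + (m.choose k' : ℝ) * ((4 * hf'' C ε p (r^2)) * (2 * hf' C ε p (r^2)) ^ k') * r^2
    = (1 + ε/r) ^ k' * (m.choose (k'+1) : ℝ) * (ε/r) * (r+ε) ^ (-((m+1:ℕ):ℝ))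
        * (((m+1:ℕ):ℝ)/((k'+1:ℕ):ℝ) - 2) ^ (k'+1) * C ^ (k'+1) := by
  have hkR : (0:ℝ) < ((k'+1:ℕ):ℝ) := by positivity
  have hrε : (0:ℝ) < r + ε := by positivity
  -- binomial identities
  have hPascal : (((m+1).choose (k'+1) : ℕ):ℝ)
      = (m.choose k' : ℝ) + (m.choose (k'+1) : ℝ) := by
    norm_cast
  have hRatio : (m.choose (k'+1) : ℝ) * ((k'+1:ℕ):ℝ)
      = (m.choose k' : ℝ) * (((m+1:ℕ):ℝ) - ((k'+1:ℕ):ℝ)) := by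
    have h := Nat.choose_succ_right_eq m k'
    have h2 : ((m.choose (k'+1) * (k'+1) : ℕ):ℝ) = ((m.choose k' * (m - k') : ℕ):ℝ) := by
      norm_cast
    push_cast [Nat.cast_sub (by omega : k' ≤ m)] at h2 ⊢
    linarith
  have hp1k : (p - 1) * ((k'+1:ℕ):ℝ) = ((k'+1:ℕ):ℝ) - ((m+1:ℕ):ℝ) := by
    rw [hp]; field_simp; ring
  have hA2p : (m.choose k' : ℝ) * (p - 1) = -(m.choose (k'+1) : ℝ) := by
    apply mul_right_cancel₀ hkR.ne'
    calc (m.choose k' : ℝ) * (p-1) * ((k'+1:ℕ):ℝ)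
        = (m.choose k':ℝ) * (((k'+1:ℕ):ℝ) - ((m+1:ℕ):ℝ)) := by rw [mul_assoc, hp1k]
      _ = -(m.choose (k'+1) : ℝ) * ((k'+1:ℕ):ℝ) := by linarith [hRatio]
  have hp2k : (p - 2) * ((k'+1:ℕ):ℝ) = -((m+1:ℕ):ℝ) := by
    rw [hp]; field_simp; push_cast; ring
  -- rewrite the rpow terms
  have hmp : ((m+1:ℕ):ℝ)/((k'+1:ℕ):ℝ) - 2 = -p := by rw [hp]; ring
  have h1 : (r+ε) ^ (p-1) = (r+ε) ^ (p-2) * (r+ε) := by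
    rw [← Real.rpow_add_one hrε.ne' (p-2)]
    congr 1
    ring
  have h2 : (r+ε) ^ (-((m+1:ℕ):ℝ)) = ((r+ε) ^ (p-2)) ^ (k'+1) := by
    rw [← Real.rpow_natCast ((r+ε) ^ (p-2)) (k'+1), ← Real.rpow_mul hrε.le, hp2k]
  have h3 : 1 + ε/r = (r+ε)/r := by field_simp
  simp only [hf', hf'', Real.sqrt_sq hr.le, h1, h2, h3, hmp]
  generalize (r+ε) ^ (p-2) = u
  generalize hRe : r + ε = R
  have hb2 : 2 * (-C * p * (u * R) * (2 * r)⁻¹) = -C * p * u * R / r := by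
    field_simp
  rw [hb2]
  trans ((((-C*p) * u)^(k'+1) * R^k' / r^(k'+1)) *
    ((((m+1).choose (k'+1) : ℕ):ℝ) * R
      + ((m.choose k' : ℕ):ℝ) * ((p-1) * r - R)))
  · simp only [div_pow, mul_pow]
    field_simp
    ring
  rw [show (((m+1).choose (k'+1) : ℕ):ℝ) * R
      + ((m.choose k' : ℕ):ℝ) * ((p-1) * r - R) = ((m.choose (k'+1) : ℕ):ℝ) * ε by
    linear_combination R * hPascal + r * hA2p - (m.choose (k'+1) : ℝ) * hRe]
  simp only [div_pow, mul_pow]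
  field_simp
  ring

theorem stmt1 (n k : ℕ) (hk : 0 < k) (hn : 2 * k < n) (C ε : ℝ) (hC : 0 < C) (hε : 0 < ε)
    (φ : EuclideanSpace ℝ (Fin n) → ℝ)
    (hφ : ∀ x : EuclideanSpace ℝ (Fin n), φ x = -C * (‖x‖ + ε) ^ ((2 : ℝ) - (n : ℝ) / (k : ℝ)))
    (x : EuclideanSpace ℝ (Fin n)) (hx : x ≠ 0) :
    Smat k (hess φ x) =
      (1 + ε / ‖x‖) ^ (k - 1) * (Nat.choose (n - 1) k : ℝ) * (ε / ‖x‖) *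
        (‖x‖ + ε) ^ (-(n : ℝ)) * ((n : ℝ) / (k : ℝ) - 2) ^ k * C ^ k ∧
    0 < Smat k (hess φ x) := by
  classical
  obtain ⟨k', rfl⟩ : ∃ k', k = k' + 1 := ⟨k - 1, (Nat.succ_pred_eq_of_pos hk).symm⟩
  obtain ⟨m, rfl⟩ : ∃ m, n = m + 1 := ⟨n - 1, (Nat.succ_pred_eq_of_pos (by omega)).symm⟩
  have hr : (0:ℝ) < ‖x‖ := by
    have : x ≠ 0 := hx
    simpa [norm_pos_iff] using this
  have hkR : (0:ℝ) < ((k'+1:ℕ):ℝ) := by positivity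
  have h2nk : (2:ℝ) < ((m+1:ℕ):ℝ)/((k'+1:ℕ):ℝ) := by
    rw [lt_div_iff₀ hkR]
    exact_mod_cast (by push_cast; exact_mod_cast hn : ((2*(k'+1):ℕ):ℝ) < ((m+1:ℕ):ℝ))
  have hH := hess_eq C ε ((2:ℝ) - ((m+1:ℕ):ℝ)/((k'+1:ℕ):ℝ)) hε φ (fun y => hφ y) x hx
  have hbpos : (0:ℝ) < 2 * hf' C ε ((2:ℝ) - ((m+1:ℕ):ℝ)/((k'+1:ℕ):ℝ)) (‖x‖^2) := by
    rw [hf']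
    simp only [Real.sqrt_sq hr.le]
    have h1 : (0:ℝ) < -C * ((2:ℝ) - ((m+1:ℕ):ℝ)/((k'+1:ℕ):ℝ)) := by nlinarith
    have h2 : (0:ℝ) < (‖x‖ + ε) ^ ((2:ℝ) - ((m+1:ℕ):ℝ)/((k'+1:ℕ):ℝ) - 1) :=
      Real.rpow_pos_of_pos (by positivity) _
    have h3 : (0:ℝ) < (2 * ‖x‖)⁻¹ := by positivity
    positivity
  have hsum : ∑ i, (x i)^2 = ‖x‖^2 := by
    rw [EuclideanSpace.norm_eq, Real.sq_sqrt (by positivity)]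
    simp [Real.norm_eq_abs, sq_abs]
  have hSmat := Smat_eq (k'+1) hk
    (4 * hf'' C ε ((2:ℝ) - ((m+1:ℕ):ℝ)/((k'+1:ℕ):ℝ)) (‖x‖^2))
    (2 * hf' C ε ((2:ℝ) - ((m+1:ℕ):ℝ)/((k'+1:ℕ):ℝ)) (‖x‖^2))
    hbpos.ne' (fun i => x i) (hess φ x) (fun i j => by rw [hH i j]; ring)
  rw [hsum] at hSmat
  simp only [Nat.add_sub_cancel] at hSmat
  have halg := final_algebra m k' hn C ε ‖x‖ hC hε hr
    ((2:ℝ) - ((m+1:ℕ):ℝ)/((k'+1:ℕ):ℝ)) rfl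
  have key : Smat (k'+1) (hess φ x) =
      (1 + ε / ‖x‖) ^ (k'+1-1) * (Nat.choose (m+1-1) (k'+1) : ℝ) * (ε / ‖x‖) *
        (‖x‖ + ε) ^ (-((m+1:ℕ):ℝ)) * (((m+1:ℕ):ℝ)/((k'+1:ℕ):ℝ) - 2) ^ (k'+1)
        * C ^ (k'+1) := by
    simp only [Nat.add_sub_cancel]
    rw [hSmat]
    exact halg
  refine ⟨key, ?_⟩
  rw [key]
  have hc : (0:ℝ) < (Nat.choose m (k'+1) : ℝ) := by
    exact_mod_cast Nat.choose_pos (by omega : k' + 1 ≤ m)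
  have h1 : (0:ℝ) < 1 + ε / ‖x‖ := by positivity
  have h2 : (0:ℝ) < (‖x‖ + ε) ^ (-((m+1:ℕ):ℝ)) := Real.rpow_pos_of_pos (by positivity) _
  simp only [Nat.add_sub_cancel]
  have h3 : (0:ℝ) < ((m+1:ℕ):ℝ)/((k'+1:ℕ):ℝ) - 2 := by linarith
  positivity
end

section
/- Let n, k be positive integers with n > 2k and μ(x) = -|x|^{2-n/k}. Then on any level set of μ, the quantity (1/|Dμ|)·S_k^{ij}μ_iμ_j equals binom(n-1, k-1)·(n/k - 2)^k·|x|^{1-n}, where S_k^{ij} = ∂S_k(D²μ)/∂μ_{ij}. -/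
open Finset

open Finset

lemma count_subsets {n k : ℕ} (hk : 0 < k) (i : Fin n) :
    ((Finset.univ.powersetCard k).filter (fun s : Finset (Fin n) => i ∈ s)).card
      = (n - 1).choose (k - 1) := by
  have h : ((Finset.univ.powersetCard k).filter (fun s : Finset (Fin n) => i ∈ s)).card
      = ((Finset.univ.erase i).powersetCard (k-1)).card := by
    refine Finset.card_bij' (fun s _ => s.erase i) (fun t _ => insert i t) ?_ ?_ ?_ ?_
    · intro s hs
      simp only [mem_filter, Finset.mem_powersetCard_univ] at hs
      rw [Finset.mem_powersetCard]
      constructor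
      · intro j hj
        simp only [Finset.mem_erase] at hj ⊢
        exact ⟨hj.1, Finset.mem_univ _⟩
      · rw [Finset.card_erase_of_mem hs.2, hs.1]
    · intro t ht
      rw [Finset.mem_powersetCard] at ht
      have hit : i ∉ t := fun hmem => (Finset.mem_erase.mp (ht.1 hmem)).1 rfl
      simp only [mem_filter, Finset.mem_powersetCard_univ]
      refine ⟨?_, Finset.mem_insert_self _ _⟩
      rw [Finset.card_insert_of_notMem hit, ht.2]
      omega
    · intro s hs
      simp only [mem_filter] at hs
      exact Finset.insert_erase hs.2
    · intro t ht
      rw [Finset.mem_powersetCard] at ht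
      have hit : i ∉ t := fun hmem => (Finset.mem_erase.mp (ht.1 hmem)).1 rfl
      exact Finset.erase_insert hit

  rw [h, Finset.card_powersetCard, Finset.card_erase_of_mem (Finset.mem_univ i),
    Finset.card_univ, Fintype.card_fin]

lemma sum_sum_subsets {n k : ℕ} (hk : 0 < k) (f : Fin n → ℝ) :
    ∑ s ∈ Finset.univ.powersetCard k, ∑ i ∈ s, f i
      = ((n - 1).choose (k - 1) : ℝ) * ∑ i, f i := by
  have : ∀ s ∈ Finset.univ.powersetCard k, ∑ i ∈ s, f i
      = ∑ i : Fin n, if i ∈ s then f i else 0 := by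
    intro s _
    rw [Finset.sum_ite_mem, Finset.univ_inter]
  rw [Finset.sum_congr rfl this, Finset.sum_comm]
  rw [Finset.mul_sum]
  apply Finset.sum_congr rfl
  intro i _
  rw [← Finset.sum_filter, Finset.sum_const, count_subsets hk i]
  simp [mul_comm]

open scoped Matrix in

lemma det_scaled_id_add_rank_one {ι : Type*} [Fintype ι] [DecidableEq ι]
    (b c : ℝ) (hb : b ≠ 0) (w : ι → ℝ) :
    (b • (1 : Matrix ι ι ℝ) + c • Matrix.vecMulVec w w).det
      = b ^ (Fintype.card ι) + c * b ^ (Fintype.card ι - 1) * ∑ i, w i ^ 2 := by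
  rcases isEmpty_or_nonempty ι with h | h
  · simp [Matrix.det_isEmpty, Fintype.card_eq_zero]
  have hcard : 1 ≤ Fintype.card ι := Fintype.card_pos
  have h1 : b • (1 : Matrix ι ι ℝ) + c • Matrix.vecMulVec w w
      = b • ((1 : Matrix ι ι ℝ) + Matrix.vecMulVec ((c/b) • w) w) := by
    rw [smul_add]
    congr 1
    ext i j
    simp [Matrix.vecMulVec_apply]
    field_simp
  rw [h1, Matrix.det_smul, Matrix.vecMulVec_eq (ι := Unit), Matrix.det_one_add_replicateCol_mul_replicateRow]
  have : w ⬝ᵥ (c / b) • w = (c / b) * ∑ i, w i ^ 2 := by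
    simp [dotProduct, Finset.mul_sum]
    apply Finset.sum_congr rfl
    intro i _
    ring
  rw [this]
  have hpow : b ^ Fintype.card ι = b * b ^ (Fintype.card ι - 1) := by
    conv_lhs => rw [show Fintype.card ι = 1 + (Fintype.card ι - 1) by omega]
    rw [pow_add, pow_one]
  rw [mul_add, mul_one, hpow]
  field_simp


lemma differentiable_det_comp {ι : Type*} [Fintype ι] [DecidableEq ι]
    {E : Type*} [NormedAddCommGroup E] [NormedSpace ℝ E]
    (g : E → Matrix ι ι ℝ) (hg : ∀ i j, Differentiable ℝ fun e => g e i j) :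
    Differentiable ℝ (fun e => (g e).det) := by
  have : (fun e => (g e).det)
      = fun e => ∑ σ : Equiv.Perm ι, ((Equiv.Perm.sign σ : ℤ) : ℝ) * ∏ i, g e (σ i) i := by
    funext e
    rw [Matrix.det_apply]
    apply Finset.sum_congr rfl
    intro σ _
    simp [Units.smul_def, zsmul_eq_mul]
  rw [this]
  apply Differentiable.fun_sum
  intro σ _
  apply Differentiable.const_mul
  intro e
  exact (HasFDerivAt.finset_prod (fun i _ => ((hg (σ i) i) e).hasFDerivAt)).differentiableAt

lemma differentiable_SmatF {n : ℕ} (k : ℕ) :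
    Differentiable ℝ (fun f : Fin n → Fin n → ℝ => Smat k (Matrix.of f)) := by
  unfold Smat
  apply Differentiable.fun_sum
  intro s _
  apply differentiable_det_comp
  intro i j
  exact (differentiable_apply (𝕜 := ℝ) (j.val : Fin n)).comp
    ((differentiable_apply (𝕜 := ℝ) (F' := fun _ : Fin n => Fin n → ℝ) (i.val : Fin n)))

lemma deriv_dir {n : ℕ} (k : ℕ) (A B : Matrix (Fin n) (Fin n) ℝ) :
    deriv (fun t : ℝ => Smat k (A + t • B)) 0
      = fderiv ℝ (fun f : Fin n → Fin n → ℝ => Smat k (Matrix.of f))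
          (Matrix.of.symm A) (Matrix.of.symm B) := by
  have hpath : HasDerivAt (fun t : ℝ => (Matrix.of.symm A) + t • (Matrix.of.symm B))
      (Matrix.of.symm B) 0 := by
    simpa using ((hasDerivAt_id (0:ℝ)).smul_const (Matrix.of.symm B)).const_add (Matrix.of.symm A)
  have h := (((differentiable_SmatF (n := n) k) _).hasFDerivAt.comp_hasDerivAt 0 hpath).deriv
  simp only [Function.comp, zero_smul, add_zero] at h
  exact h

lemma quad_sum {n : ℕ} (k : ℕ) (A : Matrix (Fin n) (Fin n) ℝ) (u : Fin n → ℝ) :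
    ∑ i, ∑ j, SkDeriv k A i j * u i * u j
      = deriv (fun t : ℝ => Smat k (A + t • Matrix.vecMulVec u u)) 0 := by
  set L := fderiv ℝ (fun f : Fin n → Fin n → ℝ => Smat k (Matrix.of f)) (Matrix.of.symm A)
    with hL
  have h1 : ∀ i j, SkDeriv k A i j = L (Matrix.of.symm (Matrix.single i j 1)) :=
    fun i j => deriv_dir k A _
  have h2 : deriv (fun t : ℝ => Smat k (A + t • Matrix.vecMulVec u u)) 0
      = L (Matrix.of.symm (Matrix.vecMulVec u u)) := deriv_dir k A _
  rw [h2]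
  have hdecomp : Matrix.of.symm (Matrix.vecMulVec u u)
      = ∑ i : Fin n, ∑ j : Fin n,
          (u i * u j) • Matrix.of.symm (Matrix.single i j (1:ℝ)) := by
    funext i' j'
    simp only [Finset.sum_apply, Pi.smul_apply, smul_eq_mul, Matrix.single,
      Matrix.vecMulVec_apply, Equiv.symm_apply_apply, Matrix.of_apply, mul_ite, mul_one, mul_zero]
    have hrow : ∀ x : Fin n, (∑ x_1 : Fin n, if x = i' ∧ x_1 = j' then u x * u x_1 else 0)
        = if x = i' then u x * u j' else 0 := by
      intro x
      by_cases h : x = i' <;> simp [h]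
    simp [hrow, Matrix.vecMulVec_apply]
  rw [hdecomp, map_sum]
  apply Finset.sum_congr rfl
  intro i _
  rw [map_sum]
  apply Finset.sum_congr rfl
  intro j _
  rw [map_smul, h1 i j]
  simp [smul_eq_mul]
  ring


variable {n : ℕ}

lemma normrpow_eq (p : ℝ) (z : EuclideanSpace ℝ (Fin n)) :
    ‖z‖ ^ p = ((‖z‖ ^ 2 : ℝ) ^ (p/2) : ℝ) := by
  rw [← Real.rpow_natCast ‖z‖ 2, ← Real.rpow_mul (norm_nonneg z)]
  congr 1
  push_cast
  ring

lemma normsq_rpow_eq (p : ℝ) (y : EuclideanSpace ℝ (Fin n)) :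
    ((‖y‖ ^ 2 : ℝ) ^ (p/2 - 1) : ℝ) = ‖y‖ ^ (p - 2) := by
  rw [← Real.rpow_natCast ‖y‖ 2, ← Real.rpow_mul (norm_nonneg y)]
  congr 1
  push_cast
  ring

lemma hasFDerivAt_normrpow (p : ℝ) (y : EuclideanSpace ℝ (Fin n)) (hy : y ≠ 0) :
    HasFDerivAt (fun z : EuclideanSpace ℝ (Fin n) => ‖z‖ ^ p)
      ((p * ‖y‖ ^ (p - 2)) • innerSL ℝ y) y := by
  have hq : HasFDerivAt (fun z : EuclideanSpace ℝ (Fin n) => (‖z‖ ^ 2 : ℝ))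
      (2 • innerSL ℝ y) y := (hasStrictFDerivAt_norm_sq y).hasFDerivAt
  have hqy : (‖y‖ ^ 2 : ℝ) ≠ 0 := pow_ne_zero 2 (norm_ne_zero_iff.mpr hy)
  have hr : HasDerivAt (fun t : ℝ => t ^ (p/2))
      ((p/2) * (‖y‖ ^ 2 : ℝ) ^ (p/2 - 1)) (‖y‖ ^ 2 : ℝ) :=
    Real.hasDerivAt_rpow_const (Or.inl hqy)
  have hcomp := hr.comp_hasFDerivAt y hq
  have hfun : (fun z : EuclideanSpace ℝ (Fin n) => ‖z‖ ^ p)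
      = fun z => ((‖z‖ ^ 2 : ℝ) ^ (p/2) : ℝ) := funext fun z => normrpow_eq p z
  rw [hfun]
  refine hcomp.congr_fderiv ?_
  symm
  ext v
  simp only [ContinuousLinearMap.coe_smul', Pi.smul_apply, smul_eq_mul, innerSL_apply_apply]
  rw [normsq_rpow_eq p y]
  show p * ‖y‖ ^ (p - 2) * (innerSL ℝ y) v = p / 2 * ‖y‖ ^ (p - 2) * ((2 • innerSL ℝ y) v)
  have : ((2 • innerSL ℝ y) v) = 2 * (innerSL ℝ y) v := by
    simp [two_smul]
    ring
  rw [this]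
  ring

lemma hasFDerivAt_nu (α : ℝ) (y : EuclideanSpace ℝ (Fin n)) (hy : y ≠ 0) :
    HasFDerivAt (fun z : EuclideanSpace ℝ (Fin n) => -‖z‖ ^ α)
      ((-α * ‖y‖ ^ (α - 2)) • innerSL ℝ y) y := by
  have h := (hasFDerivAt_normrpow α y hy).neg
  refine h.congr_fderiv ?_
  rw [← neg_smul]
  congr 1
  ring

lemma gradient_nu (α : ℝ) (x : EuclideanSpace ℝ (Fin n)) (hx : x ≠ 0) :
    gradient (fun z : EuclideanSpace ℝ (Fin n) => -‖z‖ ^ α) x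
      = (-α * ‖x‖ ^ (α - 2)) • x := by
  have hF := hasFDerivAt_nu α x hx
  have hdual : (InnerProductSpace.toDual ℝ (EuclideanSpace ℝ (Fin n)))
      ((-α * ‖x‖ ^ (α - 2)) • x) = (-α * ‖x‖ ^ (α - 2)) • innerSL ℝ x := by
    ext v
    simp [InnerProductSpace.toDual_apply_apply, real_inner_smul_left]
  have hG : HasGradientAt (fun z : EuclideanSpace ℝ (Fin n) => -‖z‖ ^ α)
      ((-α * ‖x‖ ^ (α - 2)) • x) x := by
    rw [hasGradientAt_iff_hasFDerivAt, hdual]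
    exact hF
  exact hG.gradient

lemma hess_nu (α : ℝ) (x : EuclideanSpace ℝ (Fin n)) (hx : x ≠ 0) (i j : Fin n) :
    hess (fun z : EuclideanSpace ℝ (Fin n) => -‖z‖ ^ α) x i j
      = (-α * (α - 2) * ‖x‖ ^ (α - 4)) * x i * x j
        + (if i = j then -α * ‖x‖ ^ (α - 2) else 0) := by
  have hψ : HasFDerivAt (fun z : EuclideanSpace ℝ (Fin n) => -α * ‖z‖ ^ (α - 2))
      ((-α * (α - 2) * ‖x‖ ^ (α - 4)) • innerSL ℝ x) x := by
    have h := (hasFDerivAt_normrpow (α - 2) x hx).const_mul (-α)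
    refine h.congr_fderiv ?_
    rw [smul_smul]
    congr 1
    have : α - 2 - 2 = α - 4 := by ring
    rw [this]
    ring
  have hlin : HasFDerivAt (fun z : EuclideanSpace ℝ (Fin n) => innerSL ℝ z)
      (innerSL ℝ (E := EuclideanSpace ℝ (Fin n))) x := (innerSL ℝ).hasFDerivAt
  have hDx : HasFDerivAt (fun z : EuclideanSpace ℝ (Fin n) => (-α * ‖z‖ ^ (α - 2)) • innerSL ℝ z) _ x := hψ.smul hlin
  have hev : fderiv ℝ (fun z : EuclideanSpace ℝ (Fin n) => -‖z‖ ^ α)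
      =ᶠ[nhds x] fun z => (-α * ‖z‖ ^ (α - 2)) • innerSL ℝ z := by
    filter_upwards [eventually_ne_nhds hx] with z hz
    exact (hasFDerivAt_nu α z hz).fderiv
  have h2 : fderiv ℝ (fderiv ℝ (fun z : EuclideanSpace ℝ (Fin n) => -‖z‖ ^ α)) x
      = fderiv ℝ (fun z => (-α * ‖z‖ ^ (α - 2)) • innerSL ℝ z) x := hev.fderiv_eq
  show iteratedFDeriv ℝ 2 (fun z : EuclideanSpace ℝ (Fin n) => -‖z‖ ^ α) x
      ![EuclideanSpace.single i 1, EuclideanSpace.single j 1] = _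
  rw [iteratedFDeriv_two_apply]
  simp only [Matrix.cons_val_zero, Matrix.cons_val_one, Matrix.head_cons]
  rw [h2, hDx.fderiv]
  simp only [ContinuousLinearMap.add_apply, ContinuousLinearMap.coe_smul', Pi.smul_apply,
    ContinuousLinearMap.smulRight_apply, smul_eq_mul, innerSL_apply_apply]
  simp only [EuclideanSpace.inner_single_right, EuclideanSpace.inner_single_left,
    map_one, one_mul, RCLike.conj_to_real, starRingEnd_apply, star_trivial,
    EuclideanSpace.single_apply]
  simp only [show ∀ u v : EuclideanSpace ℝ (Fin n), innerSL ℝ u v = inner ℝ u v from fun _ _ => rfl,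
    EuclideanSpace.inner_single_right, EuclideanSpace.single_apply, map_one, one_mul, RCLike.conj_to_real]
  by_cases hij : i = j
  · simp [hij]
    ring
  · simp [hij, Ne.symm hij]



lemma Smat_formula {n : ℕ} (k : ℕ) (hk : 0 < k) (b c : ℝ) (hb : b ≠ 0) (v : Fin n → ℝ)
    (hcount : ∑ s ∈ Finset.univ.powersetCard k, ∑ i ∈ s, (v i)^2
      = ((n - 1).choose (k - 1) : ℝ) * ∑ i, (v i)^2) :
    Smat k (b • (1 : Matrix (Fin n) (Fin n) ℝ) + c • Matrix.vecMulVec v v)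
      = (n.choose k : ℝ) * b ^ k
        + c * b ^ (k - 1) * ((n - 1).choose (k - 1) : ℝ) * ∑ i, v i ^ 2 := by
  unfold Smat
  have key : ∀ s ∈ Finset.univ.powersetCard k,
      ((b • (1 : Matrix (Fin n) (Fin n) ℝ) + c • Matrix.vecMulVec v v).submatrix
        (Subtype.val : {i : Fin n // i ∈ s} → Fin n)
        (Subtype.val : {i : Fin n // i ∈ s} → Fin n)).det
      = b ^ k + c * b ^ (k - 1) * ∑ i ∈ s, v i ^ 2 := by
    intro s hs
    have hcard : Fintype.card {i : Fin n // i ∈ s} = k := by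
      rw [Fintype.card_coe, (Finset.mem_powersetCard_univ.mp hs)]
    have hsub : (b • (1 : Matrix (Fin n) (Fin n) ℝ) + c • Matrix.vecMulVec v v).submatrix
        (Subtype.val : {i : Fin n // i ∈ s} → Fin n)
        (Subtype.val : {i : Fin n // i ∈ s} → Fin n)
        = b • (1 : Matrix {i : Fin n // i ∈ s} {i : Fin n // i ∈ s} ℝ)
          + c • Matrix.vecMulVec (fun i => v i.val) (fun i => v i.val) := by
      ext i j
      simp [Matrix.submatrix_apply, Matrix.one_apply, Matrix.vecMulVec_apply,
        Subtype.val_inj]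
    rw [hsub, det_scaled_id_add_rank_one b c hb, hcard]
    congr 1
    rw [← Finset.sum_coe_sort s (fun i => v i ^ 2)]
  rw [Finset.sum_congr rfl key, Finset.sum_add_distrib, Finset.sum_const,
    Finset.card_powersetCard, Finset.card_univ, Fintype.card_fin, nsmul_eq_mul,
    ← Finset.mul_sum, hcount]
  ring


theorem stmt5 (n k : ℕ) (hk : 0 < k) (hn : 2 * k < n)
    (μ : EuclideanSpace ℝ (Fin n) → ℝ)
    (hμ : ∀ x : EuclideanSpace ℝ (Fin n), μ x = -‖x‖ ^ ((2 : ℝ) - (n : ℝ) / (k : ℝ)))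
    (x : EuclideanSpace ℝ (Fin n)) (hx : x ≠ 0) :
    ‖gradient μ x‖⁻¹ *
        ∑ i, ∑ j, SkDeriv k (hess μ x) i j * gradient μ x i * gradient μ x j =
      (Nat.choose (n - 1) (k - 1) : ℝ) * ((n : ℝ) / (k : ℝ) - 2) ^ k *
        ‖x‖ ^ ((1 : ℝ) - (n : ℝ)) := by
  classical
  have hk0 : (k : ℝ) ≠ 0 := Nat.cast_ne_zero.mpr hk.ne'
  have hkR : (0 : ℝ) < (k : ℝ) := by exact_mod_cast hk
  have ha : 2 < (n : ℝ) / (k : ℝ) := by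
    rw [lt_div_iff₀ hkR]
    exact_mod_cast hn
  have hμ' : μ = fun y : EuclideanSpace ℝ (Fin n) =>
      -‖y‖ ^ ((2 : ℝ) - (n : ℝ) / (k : ℝ)) := funext hμ
  subst hμ'
  set a : ℝ := (n : ℝ) / (k : ℝ) with ha_def
  set R : ℝ := ‖x‖ with hRdef
  have hR : 0 < R := norm_pos_iff.mpr hx
  set c1 : ℝ := -(2 - a) * R ^ ((2 : ℝ) - a - 2) with hc1def
  have hc1pos : 0 < c1 := by
    rw [hc1def]
    have h1 : (0:ℝ) < -(2 - a) := by linarith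
    exact mul_pos h1 (Real.rpow_pos_of_pos hR _)
  have hc1 : c1 ≠ 0 := ne_of_gt hc1pos
  set c2 : ℝ := -(2 - a) * (2 - a - 2) * R ^ ((2 : ℝ) - a - 4) with hc2def
  set P : Matrix (Fin n) (Fin n) ℝ := Matrix.vecMulVec (fun i => x i) (fun i => x i) with hP
  have hG : gradient (fun y : EuclideanSpace ℝ (Fin n) => -‖y‖ ^ ((2 : ℝ) - a)) x
      = c1 • x := gradient_nu (2 - a) x hx
  have hH : hess (fun y : EuclideanSpace ℝ (Fin n) => -‖y‖ ^ ((2 : ℝ) - a)) x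
      = c1 • (1 : Matrix (Fin n) (Fin n) ℝ) + c2 • P := by
    ext i j
    rw [hess_nu (2 - a) x hx i j]
    simp only [Matrix.add_apply, Matrix.smul_apply, Matrix.one_apply, hP,
      Matrix.vecMulVec_apply, smul_eq_mul]
    split_ifs <;> ring
  rw [hG, hH]
  have hnorm : ‖c1 • x‖ = c1 * R := by
    rw [norm_smul, Real.norm_eq_abs, abs_of_pos hc1pos]
  have happ : ∀ i, (c1 • x) i = c1 * x i := fun i => rfl
  simp only [happ, hnorm]
  set M : Matrix (Fin n) (Fin n) ℝ := c1 • (1 : Matrix (Fin n) (Fin n) ℝ) + c2 • P with hM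
  have hsum : ∑ i, ∑ j, SkDeriv k M i j * (c1 * x i) * (c1 * x j)
      = (c1 * c1) * ∑ i, ∑ j, SkDeriv k M i j * x i * x j := by
    rw [Finset.mul_sum]
    refine Finset.sum_congr rfl fun i _ => ?_
    rw [Finset.mul_sum]
    refine Finset.sum_congr rfl fun j _ => ?_
    ring
  rw [hsum]
  have hquad := quad_sum k M (fun i => x i)
  rw [hquad]
  have hfun : (fun t : ℝ => Smat k (M + t • Matrix.vecMulVec (fun i => x i) (fun i => x i)))
      = fun t => (n.choose k : ℝ) * c1 ^ k
          + (c2 + t) * c1 ^ (k - 1) * ((n - 1).choose (k - 1) : ℝ) * ∑ i, x i ^ 2 := by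
    funext t
    have hMt : M + t • Matrix.vecMulVec (fun i => x i) (fun i => x i)
        = c1 • (1 : Matrix (Fin n) (Fin n) ℝ)
          + (c2 + t) • Matrix.vecMulVec (fun i => x i) (fun i => x i) := by
      rw [hM, hP, add_smul, add_assoc]
    rw [hMt, Smat_formula k hk c1 (c2 + t) hc1 _ (sum_sum_subsets hk _)]
  rw [hfun]
  have hder : deriv (fun t : ℝ =>
      (n.choose k : ℝ) * c1 ^ k
        + (c2 + t) * c1 ^ (k - 1) * ((n - 1).choose (k - 1) : ℝ) * ∑ i, x i ^ 2) 0
      = c1 ^ (k - 1) * ((n - 1).choose (k - 1) : ℝ) * ∑ i, x i ^ 2 := by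
    have h1 : HasDerivAt (fun t : ℝ => c2 + t) 1 0 := by
      simpa using (hasDerivAt_id (0 : ℝ)).const_add c2
    have h2 := (((h1.mul_const (c1 ^ (k - 1))).mul_const
      ((n - 1).choose (k - 1) : ℝ)).mul_const (∑ i, x i ^ 2)).const_add
      ((n.choose k : ℝ) * c1 ^ k)
    simpa using h2.deriv
  rw [hder]
  have hSR : ∑ i, x i ^ 2 = R ^ 2 := by
    rw [hRdef, EuclideanSpace.norm_eq, Real.sq_sqrt (by positivity)]
    exact Finset.sum_congr rfl fun i _ => by simp [Real.norm_eq_abs, sq_abs]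
  rw [hSR]
  have hc1k : c1 ^ k = (a - 2) ^ k * R ^ (-(n : ℝ)) := by
    have h1 : c1 = (a - 2) * R ^ (-a) := by
      rw [hc1def, show (2 : ℝ) - a - 2 = -a by ring]
      ring
    rw [h1, mul_pow]
    congr 1
    rw [← Real.rpow_natCast (R ^ (-a)) k, ← Real.rpow_mul hR.le]
    congr 1
    rw [ha_def]
    field_simp
  have hpows : (c1 * c1) * (c1 ^ (k - 1) * ((n - 1).choose (k - 1) : ℝ) * R ^ 2)
      = ((n - 1).choose (k - 1) : ℝ) * (c1 ^ k * (c1 * R ^ 2)) := by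
    have hh : c1 * c1 ^ (k - 1) = c1 ^ k := by
      rw [← pow_succ']
      congr 1
      omega
    calc (c1 * c1) * (c1 ^ (k - 1) * ((n - 1).choose (k - 1) : ℝ) * R ^ 2)
        = ((n - 1).choose (k - 1) : ℝ) * ((c1 * c1 ^ (k - 1)) * (c1 * R ^ 2)) := by ring
      _ = ((n - 1).choose (k - 1) : ℝ) * (c1 ^ k * (c1 * R ^ 2)) := by rw [hh]
  rw [hpows, hc1k]
  have hR1 : R ^ (-(n : ℝ)) * R = R ^ ((1 : ℝ) - (n : ℝ)) := by
    nth_rewrite 2 [← Real.rpow_one R]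
    rw [← Real.rpow_add hR]
    congr 1
    ring
  rw [← hR1]
  field_simp
end

section
/- Let λ' ∈ ℝ^{n-1} lie in the closed Gårding cone Γ̄_{k-1} with S_{k-1}(λ') > 0, and let α ∈ {1,...,n-1}. Then S_{k-1}(λ'|α)² - S_k(λ'|α)·S_{k-2}(λ'|α) ≥ 0, and consequently S_{k-1}(λ'|α) - S_k(λ')S_{k-2}(λ'|α)/S_{k-1}(λ') ≥ 0. -/
open Finset

section NewtonAux

open Polynomial

private lemma mesymm_cons (a : ℝ) (t : Multiset ℝ) (k : ℕ) :
    (a ::ₘ t).esymm (k + 1) = a * t.esymm k + t.esymm (k + 1) := by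
  simp only [Multiset.esymm, Multiset.powersetCard_cons, Multiset.map_add, Multiset.sum_add,
    Multiset.map_map]
  rw [add_comm]
  congr 1
  rw [← Multiset.sum_map_mul_left]
  exact congrArg _ (Multiset.map_congr rfl fun x _ => by simp)

private lemma mesymm_zero (t : Multiset ℝ) : t.esymm 0 = 1 := by
  simp [Multiset.esymm]

private lemma mesymm_eq_zero {t : Multiset ℝ} {k : ℕ} (h : Multiset.card t < k) : t.esymm k = 0 := by
  rw [Multiset.esymm, Multiset.powersetCard_eq_empty _ h]
  rfl

private lemma newton_top : ∀ (m : ℕ) (s : Multiset ℝ), Multiset.card s = m + 2 →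
    2 * ((m : ℝ) + 2) * s.esymm (m + 2) * s.esymm m ≤ ((m : ℝ) + 1) * s.esymm (m + 1) ^ 2 := by
  intro m
  induction m with
  | zero =>
    intro s hs
    obtain ⟨a, ha⟩ := Multiset.exists_mem_of_ne_zero (s := s) (by rintro rfl; simp at hs)
    obtain ⟨t, rfl⟩ := Multiset.exists_cons_of_mem ha
    rw [Multiset.card_cons] at hs
    obtain ⟨b, rfl⟩ := (Multiset.card_eq_one (s := t)).mp (by omega)
    have h2 : (a ::ₘ {b}).esymm 2 = a * b := by
      rw [mesymm_cons]
      have h0 : ({b} : Multiset ℝ).esymm 2 = 0 := mesymm_eq_zero (by simp)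
      rw [h0]
      have hb : ({b} : Multiset ℝ) = b ::ₘ 0 := rfl
      rw [hb, mesymm_cons, mesymm_zero]
      simp [Multiset.esymm, Multiset.powersetCard_eq_empty 1 (by simp : Multiset.card (0:Multiset ℝ) < 1)]
    have h1 : (a ::ₘ {b}).esymm 1 = a + b := by
      have hb : ({b} : Multiset ℝ) = b ::ₘ 0 := rfl
      rw [show (1:ℕ) = 0 + 1 from rfl, mesymm_cons, hb, mesymm_cons, mesymm_zero]
      simp [Multiset.esymm, Multiset.powersetCard_eq_empty 1 (by simp : Multiset.card (0:Multiset ℝ) < 1)]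
    rw [h2, h1, mesymm_zero]
    push_cast
    nlinarith [sq_nonneg (a - b)]
  | succ m IH =>
    intro s hs
    obtain ⟨a, ha⟩ := Multiset.exists_mem_of_ne_zero (s := s) (by rintro rfl; simp at hs)
    obtain ⟨t, rfl⟩ := Multiset.exists_cons_of_mem ha
    rw [Multiset.card_cons] at hs
    have hct : Multiset.card t = m + 2 := by omega
    have IHt := IH t hct
    set E0 := t.esymm m with hE0
    set E1 := t.esymm (m + 1) with hE1
    set E2 := t.esymm (m + 2) with hE2
    have htop : t.esymm (m + 3) = 0 := mesymm_eq_zero (by omega)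
    have g3 : (a ::ₘ t).esymm (m + 3) = a * E2 := by
      rw [show m + 3 = (m+2) + 1 from rfl, mesymm_cons, htop, add_zero]
    have g2 : (a ::ₘ t).esymm (m + 2) = a * E1 + E2 := by
      rw [show m + 2 = (m+1) + 1 from rfl, mesymm_cons]
    have g1 : (a ::ₘ t).esymm (m + 1) = a * E0 + E1 := by
      rw [show m + 1 = m + 1 from rfl, mesymm_cons]
    rw [g3, g2, g1]
    push_cast
    have hM : (0:ℝ) < (m:ℝ) + 2 := by positivity
    nlinarith [mul_nonneg (mul_nonneg (by positivity : (0:ℝ) ≤ (m:ℝ) + 3) (sq_nonneg a))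
        (sub_nonneg.mpr IHt), sq_nonneg (a * E1 - ((m:ℝ) + 2) * E2)]

private lemma choose_id {d m : ℕ} (hm : m + 1 ≤ d) :
    (d - m) * d.choose m = d * (d - 1).choose m := by
  have hd : d - 1 + 1 = d := by omega
  have h1 := Nat.add_one_mul_choose_eq (d - 1) m
  rw [hd] at h1
  rw [h1, Nat.choose_succ_right_eq, mul_comm]

private lemma choose_logconcave (d i : ℕ) : d.choose i * d.choose (i + 2) ≤ d.choose (i + 1) ^ 2 := by
  rcases le_or_gt (i + 2) d with h | h
  · have h1 : d.choose (i+1) * (i+1) = d.choose i * (d - i) := Nat.choose_succ_right_eq d i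
    have h2 : d.choose (i+2) * (i+2) = d.choose (i+1) * (d - (i+1)) := Nat.choose_succ_right_eq d (i+1)
    have key : d.choose i * d.choose (i+2) * ((d - i) * (i+2)) =
        d.choose (i+1) ^ 2 * ((i+1) * (d - (i+1))) := by
      calc d.choose i * d.choose (i+2) * ((d - i) * (i+2))
          = (d.choose i * (d-i)) * (d.choose (i+2) * (i+2)) := by ring
        _ = (d.choose (i+1) * (i+1)) * (d.choose (i+1) * (d - (i+1))) := by rw [h1, h2]
        _ = d.choose (i+1) ^ 2 * ((i+1) * (d - (i+1))) := by ring
    have hle : (i+1) * (d - (i+1)) ≤ (d - i) * (i + 2) := by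
      have h3 : d - (i+1) + 1 = d - i := by omega
      calc (i+1) * (d - (i+1)) ≤ (i + 2) * (d - (i+1) + 1) := by
            exact Nat.mul_le_mul (by omega) (by omega)
        _ = (d - i) * (i+2) := by rw [h3]; ring
    have hpos : 0 < (d - i) * (i + 2) := by
      have : 0 < d - i := by omega
      positivity
    refine Nat.le_of_mul_le_mul_right ?_ hpos
    calc d.choose i * d.choose (i+2) * ((d-i)*(i+2)) = d.choose (i+1)^2 * ((i+1)*(d-(i+1))) := key
      _ ≤ d.choose (i+1)^2 * ((d-i)*(i+2)) := Nat.mul_le_mul_left _ hle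
  · rw [Nat.choose_eq_zero_of_lt h, mul_zero]
    positivity

private lemma deriv_esymm (s : Multiset ℝ) (d : ℕ) (hcard : Multiset.card s = d) (hd : 2 ≤ d) :
    ∃ s' : Multiset ℝ, Multiset.card s' = d - 1 ∧
      ∀ m : ℕ, m ≤ d - 1 → (d : ℝ) * s'.esymm m = ((d : ℝ) - m) * s.esymm m := by
  have c2 : ((d - 1 : ℕ) : ℝ) = (d : ℝ) - 1 := by
    rw [Nat.cast_sub (by omega)]; norm_num
  set p : ℝ[X] := (s.map fun r => X - C r).prod with hp
  have hmonic : p.Monic := monic_multiset_prod_of_monic _ _ fun a _ => monic_X_sub_C a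
  have hdeg : p.natDegree = d := by
    rw [hp, natDegree_multiset_prod_X_sub_C_eq_card, hcard]
  have hroots : p.roots = s := roots_multiset_prod_X_sub_C s
  set q := derivative p with hq
  have hqcoeff : q.coeff (d - 1) = d := by
    have hc : p.coeff d = 1 := hdeg ▸ hmonic.coeff_natDegree
    rw [hq, coeff_derivative, show d - 1 + 1 = d by omega, hc, one_mul, c2]
    ring
  have hqne : q ≠ 0 := by
    intro h
    rw [h, coeff_zero] at hqcoeff
    exact Nat.cast_ne_zero.2 (show d ≠ 0 by omega) hqcoeff.symm
  have hqdegle : q.natDegree ≤ d - 1 := by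
    have h0 : q.natDegree ≤ p.natDegree - 1 := natDegree_derivative_le p
    omega
  have hqcard : Multiset.card q.roots = d - 1 := by
    have h1 : Multiset.card q.roots ≤ q.natDegree := card_roots' q
    have h2 : Multiset.card p.roots ≤ Multiset.card q.roots + 1 := p.card_roots_le_derivative
    rw [hroots, hcard] at h2
    omega
  have hqdeg : q.natDegree = d - 1 := by
    have : Multiset.card q.roots ≤ q.natDegree := card_roots' q
    omega
  have hlead : q.leadingCoeff = d := by
    rw [leadingCoeff, hqdeg, hqcoeff]
  set s' := q.roots with hs'
  have hfact : C (d:ℝ) * (s'.map fun r => X - C r).prod = q := by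
    rw [← hlead, hs']
    exact C_leadingCoeff_mul_prod_multiset_X_sub_C (by rw [hqcard, hqdeg])
  refine ⟨s', hqcard, fun m hm => ?_⟩
  have c1 : ((d - 1 - m : ℕ) : ℝ) = (d : ℝ) - 1 - m := by
    rw [Nat.cast_sub (by omega), c2]
  have e1 : q.coeff (d - 1 - m) = p.coeff (d - m) * ((d:ℝ) - m) := by
    rw [hq, coeff_derivative, show d - 1 - m + 1 = d - m by omega]
    congr 1
    rw [c1]; ring
  have e2 : p.coeff (d - m) = (-1:ℝ)^m * s.esymm m := by
    rw [hp, Multiset.prod_X_sub_C_coeff s (by omega), hcard]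
    congr 2 <;> omega
  have e3 : q.coeff (d - 1 - m) = (d:ℝ) * ((-1:ℝ)^m * s'.esymm m) := by
    rw [← hfact, coeff_C_mul, Multiset.prod_X_sub_C_coeff s' (by rw [hs', hqcard]; omega)]
    rw [hs', hqcard]
    congr 3 <;> omega
  have hsign : ((-1:ℝ)^m) ≠ 0 := by positivity
  have key := e3.symm.trans (e1.trans (by rw [e2]))
  have h' : ((-1:ℝ)^m) * ((d:ℝ) * s'.esymm m) = ((-1:ℝ)^m) * (((d:ℝ) - m) * s.esymm m) := by
    linear_combination key
  exact mul_left_cancel₀ hsign h'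

private lemma newton_ineq : ∀ d : ℕ, ∀ s : Multiset ℝ, Multiset.card s = d → ∀ j : ℕ, j + 2 ≤ d →
    s.esymm j * s.esymm (j+2) * (d.choose (j+1) : ℝ)^2 ≤
      s.esymm (j+1)^2 * (d.choose j : ℝ) * (d.choose (j+2) : ℝ) := by
  intro d
  induction d using Nat.strong_induction_on with
  | _ d IH =>
  intro s hcard j hj
  rcases eq_or_lt_of_le hj with heq | hlt
  · subst heq
    have top := newton_top j s hcard
    have hc1 : (j+2).choose (j+1) = j + 2 := Nat.choose_succ_self_right (j+1)
    have hc2 : (j+2).choose (j+2) = 1 := Nat.choose_self _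
    have hc0 : (j+2).choose j * 2 = (j+2) * (j+1) := by
      have h1 : (j+2).choose (j+1) * (j+1) = (j+2).choose j * ((j+2) - j) :=
        Nat.choose_succ_right_eq (j+2) j
      rw [hc1, show j+2-j = 2 from by omega] at h1
      omega
    have hc0R : ((j+2).choose j : ℝ) * 2 = ((j:ℝ)+2) * ((j:ℝ)+1) := by exact_mod_cast hc0
    rw [hc1, hc2]
    push_cast
    nlinarith [mul_le_mul_of_nonneg_left top (show (0:ℝ) ≤ (j:ℝ) + 2 by positivity)]
  · have hd2 : 2 ≤ d := by omega
    obtain ⟨s', hs'card, hrel⟩ := deriv_esymm s d hcard hd2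
    have IHres := IH (d-1) (by omega) s' hs'card j (by omega)
    have hd0 : (0:ℝ) < d := by positivity
    have hdj2 : (j:ℝ) + 2 < d := by exact_mod_cast hlt
    have hA : s'.esymm j = ((d:ℝ) - j) * s.esymm j / d := by
      rw [eq_div_iff hd0.ne', mul_comm (s'.esymm j)]
      exact hrel j (by omega)
    have hB : s'.esymm (j+1) = ((d:ℝ) - (j+1)) * s.esymm (j+1) / d := by
      rw [eq_div_iff hd0.ne', mul_comm (s'.esymm (j+1))]
      have := hrel (j+1) (by omega)
      push_cast at this ⊢
      linarith [this]
    have hC : s'.esymm (j+2) = ((d:ℝ) - (j+2)) * s.esymm (j+2) / d := by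
      rw [eq_div_iff hd0.ne', mul_comm (s'.esymm (j+2))]
      have := hrel (j+2) (by omega)
      push_cast at this ⊢
      linarith [this]
    have hch : ∀ m : ℕ, m + 1 ≤ d → ((d-1).choose m : ℝ) = ((d:ℝ) - m) * (d.choose m : ℝ) / d := by
      intro m hm
      rw [eq_div_iff hd0.ne']
      have hnat := choose_id hm
      have hcast : (((d - m) * d.choose m : ℕ) : ℝ) = ((d:ℝ) - m) * (d.choose m : ℝ) := by
        push_cast [Nat.cast_sub (show m ≤ d by omega)]
        ring
      have hcast2 : ((d * (d-1).choose m : ℕ) : ℝ) = (d:ℝ) * ((d-1).choose m : ℝ) := by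
        push_cast; ring
      have hthis := congrArg (Nat.cast : ℕ → ℝ) hnat
      rw [hcast, hcast2] at hthis
      linarith [hthis]
    have hk0 := hch j (by omega)
    have hk1 := hch (j+1) (by omega)
    have hk2 := hch (j+2) (by omega)
    push_cast at hk1 hk2
    rw [hA, hB, hC, hk0, hk1, hk2] at IHres
    set A := s.esymm j
    set B := s.esymm (j+1)
    set Cc := s.esymm (j+2)
    set c0 : ℝ := (d.choose j : ℝ)
    set c1 : ℝ := (d.choose (j+1) : ℝ)
    set c2 : ℝ := (d.choose (j+2) : ℝ)
    set Q : ℝ := ((d:ℝ) - j) * ((d:ℝ) - j - 1)^2 * ((d:ℝ) - j - 2) with hQ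
    have hQpos : 0 < Q := by
      rw [hQ]
      have h1 : 0 < (d:ℝ) - j - 2 := by linarith
      have h2 : 0 < (d:ℝ) - j := by linarith
      have h3 : 0 < ((d:ℝ) - j - 1)^2 := by nlinarith
      positivity
    have eqL : A * Cc * c1^2 * Q =
        (((d:ℝ) - j) * A / d) * (((d:ℝ) - (j+2)) * Cc / d) * (((d:ℝ) - (j+1)) * c1 / d)^2 * (d:ℝ)^4 := by
      field_simp
      ring
    have eqR : B^2 * c0 * c2 * Q =
        ((((d:ℝ) - (j+1)) * B / d)^2) * (((d:ℝ) - j) * c0 / d) * (((d:ℝ) - (j+2)) * c2 / d) * (d:ℝ)^4 := by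
      field_simp
      ring
    have step2 := mul_le_mul_of_nonneg_right IHres (show (0:ℝ) ≤ (d:ℝ)^4 by positivity)
    rw [← eqL, ← eqR] at step2
    exact le_of_mul_le_mul_right step2 hQpos

private lemma esymm_eq_multiset {m : ℕ} (k : ℕ) (lam : Fin m → ℝ) :
    esymm k lam = ((Finset.univ.val : Multiset (Fin m)).map lam).esymm k :=
  (Finset.esymm_map_val lam Finset.univ k).symm

private lemma esymmDel_eq_multiset {m : ℕ} (k : ℕ) (lam : Fin m → ℝ) (a : Fin m) :
    esymmDel k lam a = (((Finset.univ.erase a).val : Multiset (Fin m)).map lam).esymm k :=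
  (Finset.esymm_map_val lam (Finset.univ.erase a) k).symm

private lemma esymm_rec {m : ℕ} (k : ℕ) (lam : Fin m → ℝ) (a : Fin m) :
    esymm (k + 1) lam = lam a * esymmDel k lam a + esymmDel (k + 1) lam a := by
  rw [esymm_eq_multiset, esymmDel_eq_multiset, esymmDel_eq_multiset]
  have hval : (Finset.univ.erase a).val = (Finset.univ.val : Multiset (Fin m)).erase a :=
    Finset.erase_val _ _
  have hcons : (Finset.univ.val : Multiset (Fin m)) = a ::ₘ (Finset.univ.val).erase a :=
    (Multiset.cons_erase (Finset.mem_univ a)).symm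
  rw [hval, hcons, Multiset.map_cons, mesymm_cons]
  rw [Multiset.cons_erase (Finset.mem_univ a)]

end NewtonAux

theorem stmt8 (n k : ℕ) (hk : 1 ≤ k) (hkn : k < n) (lam : Fin (n - 1) → ℝ)
    (hG : ∀ m : ℕ, 1 ≤ m → m ≤ k - 1 → 0 ≤ esymm m lam)
    (hpos : 0 < esymm (k - 1) lam) (a : Fin (n - 1)) :
    0 ≤ esymmDel (k - 1) lam a ^ 2 - esymmDel k lam a * esymmDelZ ((k : ℤ) - 2) lam a ∧
    0 ≤ esymmDel (k - 1) lam a - esymm k lam * esymmDelZ ((k : ℤ) - 2) lam a / esymm (k - 1) lam := by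
  rcases eq_or_lt_of_le hk with hk1 | hk2
  · -- k = 1
    subst hk1
    have hZ : esymmDelZ (((1:ℕ) : ℤ) - 2) lam a = 0 := by
      rw [esymmDelZ, if_pos (by norm_num)]
    have hD0 : esymmDel (1 - 1) lam a = 1 := by
      rw [esymmDel]
      simp
    rw [hZ, hD0]
    norm_num
  · -- k ≥ 2
    have hk2' : 2 ≤ k := hk2
    have hn2 : 2 ≤ n - 1 := by omega
    set d : ℕ := n - 2 with hd
    set mu : Multiset ℝ := ((Finset.univ.erase a).val : Multiset (Fin (n-1))).map lam with hmu
    have hcd : Multiset.card mu = d := by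
      rw [hmu, Multiset.card_map, ← Finset.card_def,
        Finset.card_erase_of_mem (Finset.mem_univ a), Finset.card_univ, Fintype.card_fin]
      omega
    have hZ : esymmDelZ ((k : ℤ) - 2) lam a = esymmDel (k - 2) lam a := by
      rw [esymmDelZ, if_neg (by omega)]
      congr 1
      omega
    have hA : esymmDel (k-1) lam a = mu.esymm (k-1) := esymmDel_eq_multiset _ _ _
    have hB : esymmDel k lam a = mu.esymm k := esymmDel_eq_multiset _ _ _
    have hCm : esymmDel (k-2) lam a = mu.esymm (k-2) := esymmDel_eq_multiset _ _ _
    have goal1 : 0 ≤ esymmDel (k - 1) lam a ^ 2 -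
        esymmDel k lam a * esymmDelZ ((k : ℤ) - 2) lam a := by
      rw [hZ, hA, hB, hCm]
      rcases le_or_gt k d with hkd | hkd
      · have newt := newton_ineq d mu hcd (k-2) (by omega)
        rw [show k - 2 + 1 = k - 1 by omega, show k - 2 + 2 = k by omega] at newt
        rcases le_or_gt (mu.esymm k * mu.esymm (k-2)) 0 with hP | hP
        · nlinarith [sq_nonneg (mu.esymm (k-1))]
        · have hlog : (d.choose (k-2) : ℝ) * (d.choose k : ℝ) ≤ (d.choose (k-1) : ℝ)^2 := by
            have := choose_logconcave d (k-2)
            rw [show k - 2 + 1 = k - 1 by omega, show k - 2 + 2 = k by omega] at this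
            exact_mod_cast this
          have hc1pos : (0:ℝ) < (d.choose (k-1) : ℝ) := by
            exact_mod_cast Nat.choose_pos (show k - 1 ≤ d by omega)
          have chain : mu.esymm (k-2) * mu.esymm k * (d.choose (k-1) : ℝ)^2 ≤
              mu.esymm (k-1)^2 * (d.choose (k-1) : ℝ)^2 := by
            calc mu.esymm (k-2) * mu.esymm k * (d.choose (k-1) : ℝ)^2
                ≤ mu.esymm (k-1)^2 * (d.choose (k-2) : ℝ) * (d.choose k : ℝ) := newt
              _ = mu.esymm (k-1)^2 * ((d.choose (k-2) : ℝ) * (d.choose k : ℝ)) := by ring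
              _ ≤ mu.esymm (k-1)^2 * (d.choose (k-1) : ℝ)^2 :=
                  mul_le_mul_of_nonneg_left hlog (sq_nonneg _)
          have := le_of_mul_le_mul_right chain (by positivity)
          nlinarith [this]
      · have hBz : mu.esymm k = 0 := mesymm_eq_zero (by omega)
        rw [hBz]
        nlinarith [sq_nonneg (mu.esymm (k-1))]
    refine ⟨goal1, ?_⟩
    have hrec1 : esymm k lam = lam a * esymmDel (k-1) lam a + esymmDel k lam a := by
      have := esymm_rec (k-1) lam a
      rwa [show k - 1 + 1 = k by omega] at this
    have hrec2 : esymm (k-1) lam = lam a * esymmDel (k-2) lam a + esymmDel (k-1) lam a := by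
      have := esymm_rec (k-2) lam a
      rwa [show k - 2 + 1 = k - 1 by omega] at this
    have hne : esymm (k-1) lam ≠ 0 := hpos.ne'
    have key : esymmDel (k - 1) lam a - esymm k lam * esymmDelZ ((k : ℤ) - 2) lam a / esymm (k - 1) lam
        = (esymmDel (k - 1) lam a ^ 2 - esymmDel k lam a * esymmDelZ ((k : ℤ) - 2) lam a)
            / esymm (k - 1) lam := by
      have hne2 : lam a * esymmDel (k-2) lam a + esymmDel (k-1) lam a ≠ 0 := by
        rw [← hrec2]; exact hne
      rw [hZ, hrec1, hrec2]
      field_simp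
      ring
    rw [key]
    exact div_nonneg goal1 hpos.le
end

section
/- Let A be a symmetric n×n matrix with eigenvalues λ = (λ₁,...,λ_n). In an orthonormal basis where A is of the form with λ' = (λ₁,...,λ_{n-1}) diagonal in the first (n-1)×(n-1) block, entries A_{αn} = u_{αn} in the last column/row, and A_{nn} = u_{nn}, one has S_k(A) = S_{k-1}(λ')u_{nn} + S_k(λ') - Σ_α S_{k-2}(λ'|α)u_{αn}². -/
open Finset

noncomputable def blockMat {m : ℕ} (lam : Fin m → ℝ) (b : Fin m → ℝ) (c : ℝ) :
    Matrix (Fin (m+1)) (Fin (m+1)) ℝ :=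
  fun i j =>
    Fin.lastCases (Fin.lastCases c (fun β => b β) j)
      (fun α => Fin.lastCases (b α) (fun β => if α = β then lam α else 0) j) i

section bm
variable {m : ℕ} (lam b : Fin m → ℝ) (c : ℝ)

@[simp] lemma bm_ll : blockMat lam b c (Fin.last m) (Fin.last m) = c := by
  simp [blockMat]

@[simp] lemma bm_lc (β : Fin m) :
    blockMat lam b c (Fin.last m) (Fin.castSucc β) = b β := by simp [blockMat]

@[simp] lemma bm_cl (α : Fin m) :
    blockMat lam b c (Fin.castSucc α) (Fin.last m) = b α := by simp [blockMat]

@[simp] lemma bm_cc (α β : Fin m) :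
    blockMat lam b c (Fin.castSucc α) (Fin.castSucc β) = if α = β then lam α else 0 := by
  simp [blockMat]

end bm

theorem arrowDet : ∀ (m : ℕ) (d v : Fin m → ℝ) (c : ℝ),
    (blockMat d v c).det =
      c * ∏ i, d i - ∑ α, v α ^ 2 * ∏ i ∈ Finset.univ.erase α, d i := by
  intro m
  induction m with
  | zero =>
    intro d v c
    rw [Matrix.det_fin_one]
    have h0 : (0 : Fin 1) = Fin.last 0 := rfl
    rw [h0, bm_ll]
    simp
  | succ m IH =>
    intro d v c
    rw [Matrix.det_succ_row_zero, Fin.sum_univ_succ, Fin.sum_univ_castSucc]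
    have h0 : (0 : Fin (m+2)) = Fin.castSucc 0 := rfl
    have e00 : blockMat d v c 0 0 = d 0 := by rw [h0, bm_cc]; simp
    have emid : ∀ i : Fin m, blockMat d v c 0 i.castSucc.succ = 0 := by
      intro i
      rw [Fin.succ_castSucc, h0, bm_cc]
      simp [(Fin.succ_ne_zero i).symm]
    have elast : blockMat d v c 0 (Fin.last m).succ = v 0 := by
      rw [Fin.succ_last, h0, bm_cl]
    have subA : (blockMat d v c).submatrix Fin.succ (Fin.succAbove 0) =
        blockMat (fun i => d i.succ) (fun i => v i.succ) c := by
      funext i j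
      rw [Fin.succAbove_zero]
      simp only [Matrix.submatrix_apply]
      induction i using Fin.lastCases with
      | last =>
        induction j using Fin.lastCases with
        | last => simp [Fin.succ_last]
        | cast j => simp [Fin.succ_last, Fin.succ_castSucc, -Fin.castSucc_succ]
      | cast i =>
        induction j using Fin.lastCases with
        | last => simp [Fin.succ_last, Fin.succ_castSucc, -Fin.castSucc_succ]
        | cast j => simp [Fin.succ_castSucc, Fin.succ_inj, -Fin.castSucc_succ]
    -- the last minor
    have hN : ((blockMat d v c).submatrix Fin.succ (Fin.last (m+1)).succAbove).det =
        (-1) ^ m * v 0 * ∏ i : Fin m, d i.succ := by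
      rw [Fin.succAbove_last, Matrix.det_succ_column_zero, Fin.sum_univ_castSucc]
      have hmid : ∀ i : Fin m,
          (blockMat d v c).submatrix Fin.succ Fin.castSucc i.castSucc 0 = 0 := by
        intro i
        simp only [Matrix.submatrix_apply]
        rw [Fin.succ_castSucc, bm_cc]
        simp [Fin.succ_ne_zero]
      simp only [hmid, mul_zero, zero_mul, Finset.sum_const_zero, zero_add]
      have hlentry : (blockMat d v c).submatrix Fin.succ Fin.castSucc (Fin.last m) 0 = v 0 := by
        simp only [Matrix.submatrix_apply]
        rw [show ((0:Fin (m+1)) : Fin (m+1)) = (0:Fin (m+1)) from rfl]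
        rw [Fin.succ_last]
        rw [show (Fin.castSucc (0 : Fin (m+1))) = Fin.castSucc (0 : Fin (m+1)) from rfl, bm_lc]
      have hP : ((blockMat d v c).submatrix Fin.succ Fin.castSucc).submatrix
          (Fin.last m).succAbove Fin.succ = Matrix.diagonal (fun i : Fin m => d i.succ) := by
        funext i j
        simp only [Matrix.submatrix_apply, Fin.succAbove_last]
        rw [Fin.succ_castSucc, bm_cc]
        simp [Matrix.diagonal, Fin.succ_inj]
      rw [hlentry, hP, Matrix.det_diagonal, Fin.val_last]
    have hprod : ∏ i : Fin (m+1), d i = d 0 * ∏ i : Fin m, d i.succ := Fin.prod_univ_succ d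
    have he0 : ∏ i ∈ (Finset.univ : Finset (Fin (m+1))).erase 0, d i
        = ∏ i : Fin m, d i.succ := by
      rw [Fin.univ_succ, Finset.erase_cons, Finset.prod_map]
      rfl
    have heS : ∀ α : Fin m, ∏ i ∈ (Finset.univ : Finset (Fin (m+1))).erase α.succ, d i
        = d 0 * ∏ i ∈ Finset.univ.erase α, d i.succ := by
      intro α
      rw [Fin.univ_succ, Finset.erase_cons_of_ne _ (Fin.succ_ne_zero α).symm,
        Finset.prod_cons]
      congr 1
      rw [show (Fin.succ α) = (⟨Fin.succ, Fin.succ_injective m⟩ : Fin m ↪ Fin (m+1)) α from rfl,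
        ← Finset.map_erase, Finset.prod_map]
      rfl
    have hsign : (-1:ℝ)^(m+1) * (-1)^m = -1 := by
      rw [← pow_add]
      exact Odd.neg_one_pow ⟨m, by omega⟩
    rw [e00, elast, subA, IH]
    simp only [emid, mul_zero, zero_mul, Finset.sum_const_zero, zero_add]
    rw [Fin.succ_last, hN, Fin.val_last, Fin.val_zero, pow_zero]
    rw [Fin.sum_univ_succ (f := fun α => v α ^ 2 * ∏ i ∈ Finset.univ.erase α, d i)]
    rw [hprod, he0]
    simp only [heS]
    have hsum2 : ∑ α : Fin m, v α.succ ^2 * (d 0 * ∏ i ∈ Finset.univ.erase α, d i.succ)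
        = d 0 * ∑ α : Fin m, v α.succ ^2 * ∏ i ∈ Finset.univ.erase α, d i.succ := by
      rw [Finset.mul_sum]
      exact Finset.sum_congr rfl fun _ _ => by ring
    rw [hsum2]
    have expand : (-1:ℝ) ^ (m + 1) * v 0 * ((-1) ^ m * v 0 * ∏ i : Fin m, d i.succ)
        = ((-1:ℝ)^(m+1) * (-1)^m) * (v 0 ^2 * ∏ i : Fin m, d i.succ) := by ring
    rw [expand, hsign]
    ring


def ext1 {m : ℕ} (f : Fin m → ℝ) : Fin (m+1) → ℝ := Fin.snoc f 0

@[simp] lemma ext1_cast {m : ℕ} (f : Fin m → ℝ) (α : Fin m) :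
    ext1 f (Fin.castSucc α) = f α := by simp [ext1]

@[simp] lemma ext1_last {m : ℕ} (f : Fin m → ℝ) : ext1 f (Fin.last m) = 0 := by simp [ext1]

section sub
variable {m : ℕ} (lam b : Fin m → ℝ) (c : ℝ)

lemma bm_ne_ne {x y : Fin (m+1)} (hx : x ≠ Fin.last m) (hy : y ≠ Fin.last m) :
    blockMat lam b c x y = if x = y then ext1 lam x else 0 := by
  obtain ⟨α, rfl⟩ := Fin.exists_castSucc_eq.mpr hx
  obtain ⟨β, rfl⟩ := Fin.exists_castSucc_eq.mpr hy
  rw [bm_cc]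
  simp [Fin.castSucc_inj]

lemma bm_ne_last {x : Fin (m+1)} (hx : x ≠ Fin.last m) :
    blockMat lam b c x (Fin.last m) = ext1 b x ∧
    blockMat lam b c (Fin.last m) x = ext1 b x := by
  obtain ⟨α, rfl⟩ := Fin.exists_castSucc_eq.mpr hx
  rw [bm_cl, bm_lc]
  simp

lemma det_noLast (s : Finset (Fin (m+1))) (hs : Fin.last m ∉ s) :
    ((blockMat lam b c).submatrix (Subtype.val : {i // i ∈ s} → Fin (m+1)) Subtype.val).det
      = ∏ x ∈ s, ext1 lam x := by
  have hdiag : (blockMat lam b c).submatrix (Subtype.val : {i // i ∈ s} → Fin (m+1)) Subtype.val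
      = Matrix.diagonal (fun i : {i // i ∈ s} => ext1 lam i.val) := by
    ext ⟨x, hx⟩ ⟨y, hy⟩
    have hx' : x ≠ Fin.last m := fun h => hs (h ▸ hx)
    have hy' : y ≠ Fin.last m := fun h => hs (h ▸ hy)
    rw [Matrix.submatrix_apply, bm_ne_ne lam b c hx' hy']
    by_cases hxy : x = y
    · simp [hxy, Matrix.diagonal_apply, Subtype.ext_iff]
    · simp [hxy, Matrix.diagonal_apply, Subtype.ext_iff]
  rw [hdiag, Matrix.det_diagonal]
  exact Finset.prod_coe_sort s (fun x => ext1 lam x)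

lemma det_withLast (s : Finset (Fin (m+1))) (hs : Fin.last m ∈ s) :
    ((blockMat lam b c).submatrix (Subtype.val : {i // i ∈ s} → Fin (m+1)) Subtype.val).det
      = c * ∏ x ∈ s.erase (Fin.last m), ext1 lam x
        - ∑ x ∈ s.erase (Fin.last m), (ext1 b x) ^ 2 *
            ∏ y ∈ (s.erase (Fin.last m)).erase x, ext1 lam y := by
  classical
  set t := s.erase (Fin.last m) with ht
  set r := t.card with hr
  set g : Fin r ↪o Fin (m+1) := t.orderEmbOfFin rfl with hg
  have hgt : ∀ i, g i ∈ t := fun i => Finset.orderEmbOfFin_mem t rfl i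
  have hgne : ∀ i, g i ≠ Fin.last m := fun i h => (Finset.notMem_erase _ _) (h ▸ hgt i)
  have utl : Finset.univ.map g.toEmbedding = t := by
    apply Finset.eq_of_subset_of_card_le
    · intro x hx
      obtain ⟨i, _, rfl⟩ := Finset.mem_map.mp hx
      exact hgt i
    · rw [Finset.card_map, Finset.card_univ, Fintype.card_fin]
  -- the enumeration of s
  set e : Fin (r+1) → Fin (m+1) := Fin.snoc (fun i => g i) (Fin.last m) with he
  have hecast : ∀ i : Fin r, e (Fin.castSucc i) = g i := fun i => by simp [he]
  have helast : e (Fin.last r) = Fin.last m := by simp [he]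
  have hes : ∀ i, e i ∈ s := by
    intro i
    induction i using Fin.lastCases with
    | last => rw [helast]; exact hs
    | cast i => rw [hecast]; exact Finset.mem_of_mem_erase (hgt i)
  have hinj : Function.Injective e := by
    intro i j hij
    induction i using Fin.lastCases with
    | last =>
      induction j using Fin.lastCases with
      | last => rfl
      | cast j => rw [helast, hecast] at hij; exact absurd hij.symm (hgne j)
    | cast i =>
      induction j using Fin.lastCases with
      | last => rw [helast, hecast] at hij; exact absurd hij (hgne i)
      | cast j =>
        rw [hecast, hecast] at hij
        exact congrArg Fin.castSucc (g.injective hij)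
  have hsurj : ∀ x ∈ s, ∃ i, e i = x := by
    intro x hx
    by_cases hxl : x = Fin.last m
    · exact ⟨Fin.last r, by rw [helast, hxl]⟩
    · have hxt : x ∈ t := Finset.mem_erase.mpr ⟨hxl, hx⟩
      have : x ∈ Set.range g := by rw [Finset.range_orderEmbOfFin]; exact hxt
      obtain ⟨i, hi⟩ := this
      exact ⟨Fin.castSucc i, by rw [hecast, hi]⟩
  set E : Fin (r+1) ≃ {i // i ∈ s} :=
    Equiv.ofBijective (fun i => (⟨e i, hes i⟩ : {i // i ∈ s}))
      ⟨fun i j hij => hinj (Subtype.ext_iff.mp hij),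
       fun ⟨x, hx⟩ => by obtain ⟨i, hi⟩ := hsurj x hx; exact ⟨i, Subtype.ext hi⟩⟩ with hE
  have hdet := Matrix.det_submatrix_equiv_self E
    ((blockMat lam b c).submatrix (Subtype.val : {i // i ∈ s} → Fin (m+1)) Subtype.val)
  have hkey : ((blockMat lam b c).submatrix
        (Subtype.val : {i // i ∈ s} → Fin (m+1)) Subtype.val).submatrix E E
      = blockMat (fun i => ext1 lam (g i)) (fun i => ext1 b (g i)) c := by
    funext i j
    have hEval : ∀ i, ((E i : {i // i ∈ s}) : Fin (m+1)) = e i := fun _ => rfl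
    simp only [Matrix.submatrix_apply, hEval]
    induction i using Fin.lastCases with
    | last =>
      induction j using Fin.lastCases with
      | last => rw [helast, bm_ll, bm_ll]
      | cast j =>
        rw [helast, hecast, bm_lc, (bm_ne_last lam b c (hgne j)).2]
    | cast i =>
      induction j using Fin.lastCases with
      | last =>
        rw [helast, hecast, bm_cl, (bm_ne_last lam b c (hgne i)).1]
      | cast j =>
        rw [hecast, hecast, bm_cc, bm_ne_ne lam b c (hgne i) (hgne j)]
        by_cases hij : i = j
        · simp [hij]
        · have : g i ≠ g j := fun h => hij (g.injective h)
          simp [hij, this]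
  rw [← hdet, hkey, arrowDet]
  have hprodt : ∏ x ∈ t, ext1 lam x = ∏ i : Fin r, ext1 lam (g i) := by
    rw [← utl, Finset.prod_map]; rfl
  have hsumt : ∑ x ∈ t, (ext1 b x) ^ 2 * ∏ y ∈ t.erase x, ext1 lam y
      = ∑ α : Fin r, (ext1 b (g α)) ^ 2 * ∏ y ∈ t.erase (g α), ext1 lam y := by
    rw [← utl, Finset.sum_map]; rfl
  have herase : ∀ α : Fin r, ∏ y ∈ t.erase (g α), ext1 lam y
      = ∏ i ∈ Finset.univ.erase α, ext1 lam (g i) := by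
    intro α
    rw [← utl, show g α = g.toEmbedding α from rfl, ← Finset.map_erase, Finset.prod_map]
    rfl
  rw [hprodt, hsumt]
  congr 1
  exact Finset.sum_congr rfl fun α _ => by rw [herase]

end sub

lemma sum_pcard_filter {α : Type*} [DecidableEq α] (s : Finset α) (a : α) (ha : a ∈ s)
    (j : ℕ) (F : Finset α → ℝ) :
    ∑ u ∈ (Finset.powersetCard (j+1) s).filter (fun u => a ∈ u), F u
      = ∑ w ∈ Finset.powersetCard j (s.erase a), F (insert a w) := by
  refine Finset.sum_nbij' (fun u => u.erase a) (fun w => insert a w) ?_ ?_ ?_ ?_ ?_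
  · intro u hu
    rw [Finset.mem_filter, Finset.mem_powersetCard] at hu
    rw [Finset.mem_powersetCard]
    exact ⟨Finset.erase_subset_erase a hu.1.1,
      by rw [Finset.card_erase_of_mem hu.2, hu.1.2]; omega⟩
  · intro w hw
    rw [Finset.mem_powersetCard] at hw
    have haw : a ∉ w := fun h => Finset.notMem_erase a s (hw.1 h)
    rw [Finset.mem_filter, Finset.mem_powersetCard]
    refine ⟨⟨?_, by rw [Finset.card_insert_of_notMem haw, hw.2]⟩, Finset.mem_insert_self a w⟩
    intro x hx
    rcases Finset.mem_insert.mp hx with rfl | hx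
    · exact ha
    · exact Finset.mem_of_mem_erase (hw.1 hx)
  · intro u hu
    exact Finset.insert_erase (Finset.mem_filter.mp hu).2
  · intro w hw
    rw [Finset.mem_powersetCard] at hw
    exact Finset.erase_insert (fun h => Finset.notMem_erase a s (hw.1 h))
  · intro u hu
    rw [Finset.insert_erase (Finset.mem_filter.mp hu).2]

lemma swap_lemma {α : Type*} [Fintype α] [DecidableEq α] (S : Finset (Finset α))
    (f : α → Finset α → ℝ) :
    ∑ u ∈ S, ∑ x ∈ u, f x u
      = ∑ x : α, ∑ u ∈ S.filter (fun u => x ∈ u), f x u := by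
  have h1 : ∀ u ∈ S, ∑ x ∈ u, f x u = ∑ x : α, if x ∈ u then f x u else 0 := by
    intro u _
    rw [← Finset.sum_filter]
    congr 1
    ext x; simp
  rw [Finset.sum_congr rfl h1, Finset.sum_comm]
  exact Finset.sum_congr rfl fun x _ => (Finset.sum_filter _ _).symm

section outer
variable {m : ℕ}

lemma erase_last_eq : (Finset.univ : Finset (Fin (m+1))).erase (Fin.last m)
    = (Finset.univ : Finset (Fin m)).map Fin.castSuccEmb := by
  rw [Fin.univ_castSuccEmb, Finset.erase_cons]

lemma filter_out_eq (k : ℕ) :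
    (Finset.powersetCard k (Finset.univ : Finset (Fin (m+1)))).filter
        (fun u => Fin.last m ∉ u)
      = Finset.powersetCard k ((Finset.univ : Finset (Fin (m+1))).erase (Fin.last m)) := by
  ext u
  simp only [Finset.mem_filter, Finset.mem_powersetCard, Finset.subset_erase]
  tauto

lemma transfer_prod (j : ℕ) (lam : Fin m → ℝ) :
    ∑ w ∈ Finset.powersetCard j ((Finset.univ : Finset (Fin (m+1))).erase (Fin.last m)),
        ∏ x ∈ w, ext1 lam x = esymm j lam := by
  rw [esymm, erase_last_eq, Finset.powersetCard_map, Finset.sum_map]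
  refine Finset.sum_congr rfl fun u _ => ?_
  rw [show (Finset.mapEmbedding Fin.castSuccEmb).toEmbedding u = u.map Fin.castSuccEmb from Finset.mapEmbedding_apply, Finset.prod_map]
  refine Finset.prod_congr rfl fun α _ => ?_
  rw [show Fin.castSuccEmb α = Fin.castSucc α from rfl, ext1_cast]

lemma transfer_sum (j : ℕ) (lam b : Fin m → ℝ) :
    ∑ w ∈ Finset.powersetCard j ((Finset.univ : Finset (Fin (m+1))).erase (Fin.last m)),
        ∑ x ∈ w, (ext1 b x) ^ 2 * ∏ y ∈ w.erase x, ext1 lam y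
      = ∑ u ∈ Finset.powersetCard j (Finset.univ : Finset (Fin m)),
          ∑ α ∈ u, (b α) ^ 2 * ∏ β ∈ u.erase α, lam β := by
  rw [erase_last_eq, Finset.powersetCard_map, Finset.sum_map]
  refine Finset.sum_congr rfl fun u _ => ?_
  rw [show (Finset.mapEmbedding Fin.castSuccEmb).toEmbedding u = u.map Fin.castSuccEmb from Finset.mapEmbedding_apply, Finset.sum_map]
  refine Finset.sum_congr rfl fun α _ => ?_
  rw [← Finset.map_erase, Finset.prod_map]
  have h1 : ∀ x : Fin m, ext1 b ((Fin.castSuccEmb : Fin m ↪ Fin (m+1)) x) = b x :=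
    fun x => ext1_cast b x
  have h2 : ∀ x : Fin m, ext1 lam ((Fin.castSuccEmb : Fin m ↪ Fin (m+1)) x) = lam x :=
    fun x => ext1_cast lam x
  rw [h1]
  exact congrArg _ (Finset.prod_congr rfl fun x _ => h2 x)

end outer

theorem stmt10 (m k : ℕ) (lam : Fin m → ℝ) (b : Fin m → ℝ) (c : ℝ) :
    Smat k (blockMat lam b c) =
      esymmZ ((k : ℤ) - 1) lam * c + esymm k lam -
        ∑ a, esymmDelZ ((k : ℤ) - 2) lam a * (b a) ^ 2 := by
  classical
  rw [Smat, ← Finset.sum_filter_add_sum_filter_not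
    (Finset.powersetCard k (Finset.univ : Finset (Fin (m+1)))) (fun u => Fin.last m ∈ u)]
  have hout : ∑ s ∈ (Finset.powersetCard k (Finset.univ : Finset (Fin (m+1)))).filter
        (fun u => ¬ Fin.last m ∈ u),
      ((blockMat lam b c).submatrix (Subtype.val : {i // i ∈ s} → Fin (m+1)) Subtype.val).det
      = esymm k lam := by
    rw [Finset.sum_congr rfl (fun s hs => det_noLast lam b c s (Finset.mem_filter.mp hs).2)]
    rw [filter_out_eq, transfer_prod]
  rw [hout]
  cases k with
  | zero =>
    have hempty : (Finset.powersetCard 0 (Finset.univ : Finset (Fin (m+1)))).filter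
        (fun u => Fin.last m ∈ u) = ∅ := by
      ext u
      simp [Finset.powersetCard_zero]
      rintro rfl
      simp
    rw [hempty, Finset.sum_empty]
    have h1 : esymmZ ((0 : ℕ) - 1 : ℤ) lam = 0 := by rw [esymmZ]; norm_num
    have h2 : ∀ a : Fin m, esymmDelZ ((0 : ℕ) - 2 : ℤ) lam a = 0 := by
      intro a; rw [esymmDelZ]; norm_num
    simp only [h1, h2]
    simp
  | succ j =>
    have hin : ∑ s ∈ (Finset.powersetCard (j+1) (Finset.univ : Finset (Fin (m+1)))).filter
          (fun u => Fin.last m ∈ u),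
        ((blockMat lam b c).submatrix (Subtype.val : {i // i ∈ s} → Fin (m+1)) Subtype.val).det
        = c * esymm j lam
          - ∑ u ∈ Finset.powersetCard j (Finset.univ : Finset (Fin m)),
              ∑ α ∈ u, (b α) ^ 2 * ∏ β ∈ u.erase α, lam β := by
      rw [Finset.sum_congr rfl (fun s hs => det_withLast lam b c s (Finset.mem_filter.mp hs).2)]
      rw [sum_pcard_filter Finset.univ (Fin.last m) (Finset.mem_univ _) j
        (fun s => c * ∏ x ∈ s.erase (Fin.last m), ext1 lam x
          - ∑ x ∈ s.erase (Fin.last m), (ext1 b x) ^ 2 *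
              ∏ y ∈ (s.erase (Fin.last m)).erase x, ext1 lam y)]
      have hw : ∀ w ∈ Finset.powersetCard j
          ((Finset.univ : Finset (Fin (m+1))).erase (Fin.last m)),
          (insert (Fin.last m) w).erase (Fin.last m) = w := by
        intro w hw
        refine Finset.erase_insert fun h => ?_
        exact Finset.notMem_erase _ _ ((Finset.mem_powersetCard.mp hw).1 h)
      rw [Finset.sum_congr rfl (fun w hww => by rw [hw w hww])]
      rw [Finset.sum_sub_distrib, ← Finset.mul_sum, transfer_prod, transfer_sum]
    rw [hin, swap_lemma]
    have hsum_final : ∀ α : Fin m,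
        ∑ u ∈ (Finset.powersetCard j (Finset.univ : Finset (Fin m))).filter
            (fun u => α ∈ u), (b α) ^ 2 * ∏ β ∈ u.erase α, lam β
          = esymmDelZ ((j+1 : ℕ) - 2 : ℤ) lam α * b α ^ 2 := by
      intro α
      cases j with
      | zero =>
        have : (Finset.powersetCard 0 (Finset.univ : Finset (Fin m))).filter
            (fun u => α ∈ u) = ∅ := by
          ext u
          simp [Finset.powersetCard_zero]
          rintro rfl
          simp
        rw [this, Finset.sum_empty, esymmDelZ]
        norm_num
      | succ j' =>
        rw [sum_pcard_filter Finset.univ α (Finset.mem_univ α) j'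
          (fun u => (b α) ^ 2 * ∏ β ∈ u.erase α, lam β)]
        have hw : ∀ w ∈ Finset.powersetCard j'
            ((Finset.univ : Finset (Fin m)).erase α), (insert α w).erase α = w := by
          intro w hw
          refine Finset.erase_insert fun h => ?_
          exact Finset.notMem_erase _ _ ((Finset.mem_powersetCard.mp hw).1 h)
        rw [Finset.sum_congr rfl (fun w hww => by rw [hw w hww])]
        rw [← Finset.mul_sum]
        have hz : esymmDelZ ((j'+2 : ℕ) - 2 : ℤ) lam α = esymmDel j' lam α := by
          rw [esymmDelZ]
          have h1 : ((j'+2 : ℕ) : ℤ) - 2 = (j' : ℤ) := by push_cast; ring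
          rw [h1]
          simp
        rw [hz, esymmDel]
        ring
    rw [Finset.sum_congr rfl (fun α _ => hsum_final α)]
    have hz1 : esymmZ ((j+1 : ℕ) - 1 : ℤ) lam = esymm j lam := by
      rw [esymmZ]
      have h1 : ((j+1 : ℕ) : ℤ) - 1 = (j : ℤ) := by push_cast; ring
      rw [h1]
      simp
    rw [hz1]
    ring
end

section
/- Let f_ε(x) = (1 + ε/|x|)^{k-1} · binom(n-1,k) · (ε/|x|) · (|x| + ε)^{-n} · (n/k - 2)^k on ℝ^n \ {0}, with n > 2k and ε > 0. Then there exists a constant A > 0, independent of ε (for 0 < ε < 1) and of x for |x| ≥ 1, such that |Df_ε(x)| ≤ A·f_ε(x) and Δf_ε(x) ≥ -A·f_ε(x) for all |x| ≥ 1. -/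
open Finset

open Filter Topology

set_option maxHeartbeats 1000000

lemma hasFDerivAt_norm' {E : Type*} [NormedAddCommGroup E] [InnerProductSpace ℝ E]
    {y : E} (hy : y ≠ 0) :
    HasFDerivAt (fun z : E => ‖z‖) (‖y‖⁻¹ • innerSL ℝ y) y := by
  have hy' : (0:ℝ) < ‖y‖ := norm_pos_iff.mpr hy
  have h1 : HasFDerivAt (fun z : E => ‖z‖^2) (2 • innerSL ℝ y) y :=
    (hasStrictFDerivAt_norm_sq y).hasFDerivAt
  have h2 := h1.sqrt (by positivity)
  have h3 : (fun z : E => Real.sqrt (‖z‖^2)) = fun z : E => ‖z‖ := by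
    funext z; exact Real.sqrt_sq (norm_nonneg z)
  rw [h3] at h2
  convert h2 using 1
  rw [Real.sqrt_sq hy'.le]
  ext v
  simp only [ContinuousLinearMap.smul_apply]
  rw [smul_comm]
  simp [smul_smul]
  ring



theorem stmt16 (n k : ℕ) (hk : 0 < k) (hn : 2 * k < n) :
    ∃ A : ℝ, 0 < A ∧ ∀ ε : ℝ, 0 < ε → ε < 1 →
      ∀ f : EuclideanSpace ℝ (Fin n) → ℝ,
        (∀ y : EuclideanSpace ℝ (Fin n),
          f y = (1 + ε / ‖y‖) ^ (k - 1) * (Nat.choose (n - 1) k : ℝ) * (ε / ‖y‖) *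
            (‖y‖ + ε) ^ (-(n : ℝ)) * ((n : ℝ) / (k : ℝ) - 2) ^ k) →
        ∀ x : EuclideanSpace ℝ (Fin n), 1 ≤ ‖x‖ →
          ‖gradient f x‖ ≤ A * f x ∧ -(A * f x) ≤ ∑ i, hess f x i i := by
  refine ⟨3 * ((n:ℝ)+1)^2, by positivity, ?_⟩
  intro ε hε0 hε1 f hf x hxn
  obtain ⟨m, hm⟩ : ∃ m : ℤ, m = (k:ℤ) - 1 - n := ⟨_, rfl⟩
  obtain ⟨c, hc⟩ : ∃ c : ℝ, c = (n:ℝ)/(k:ℝ) - 2 := ⟨_, rfl⟩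
  obtain ⟨K, hKdef⟩ : ∃ K : ℝ, K = (Nat.choose (n-1) k : ℝ) * c^k := ⟨_, rfl⟩
  have hc0 : 0 < c := by
    rw [hc, sub_pos, lt_div_iff₀ (by exact_mod_cast hk)]
    exact_mod_cast (by push_cast; linarith [show (2*k:ℝ) < n by exact_mod_cast hn] : (2:ℝ) * k < n)
  have hK0 : (0:ℝ) < K := by
    rw [hKdef]
    have h1 : 0 < Nat.choose (n-1) k := Nat.choose_pos (by omega)
    positivity
  obtain ⟨φ, hφeq⟩ : ∃ φ : ℝ → ℝ, ∀ t, φ t = K * ε * ((t+ε)^m * t^(-(k:ℤ))) := ⟨_, fun _ => rfl⟩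
  obtain ⟨L, hLeq⟩ : ∃ L : ℝ → ℝ, ∀ t, L t = (m:ℝ)/(t+ε) - (k:ℝ)/t := ⟨_, fun _ => rfl⟩
  obtain ⟨L', hL'eq⟩ : ∃ L' : ℝ → ℝ, ∀ t, L' t = (m:ℝ) * (-1/(t+ε)^2) - (k:ℝ) * (-(t^2)⁻¹) :=
    ⟨_, fun _ => rfl⟩
  obtain ⟨r, hr⟩ : ∃ r : ℝ, r = ‖x‖ := ⟨_, rfl⟩
  have hx : (1:ℝ) ≤ r := hr ▸ hxn
  have hr0 : (0:ℝ) < r := lt_of_lt_of_le one_pos hx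
  have hx0 : x ≠ 0 := by
    intro h
    rw [h] at hr; simp at hr; rw [hr] at hr0; exact lt_irrefl _ hr0
  -- f equals φ ∘ norm away from 0
  have hfφ : ∀ y : EuclideanSpace ℝ (Fin n), y ≠ 0 → f y = φ ‖y‖ := by
    intro y hy
    have ht : (0:ℝ) < ‖y‖ := norm_pos_iff.mpr hy
    rw [hf y, hφeq]
    generalize htdef : ‖y‖ = t at ht ⊢
    have hta : (0:ℝ) < t + ε := by linarith
    have e1 : (t+ε) ^ (-(n:ℝ)) = ((t+ε)^(n:ℕ))⁻¹ := by
      rw [← Real.rpow_natCast (t+ε) n, ← Real.rpow_neg hta.le]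
    have e2 : (t+ε)^m = ((t+ε)^(n+1-k : ℕ))⁻¹ := by
      rw [← zpow_natCast, ← zpow_neg]
      congr 1
      rw [hm]
      push_cast [show k ≤ n + 1 by omega]
      ring
    have e3 : t^(-(k:ℤ)) = (t^k)⁻¹ := by rw [zpow_neg, zpow_natCast]
    have e4 : 1 + ε/t = (t+ε)/t := by field_simp
    have hpow1 : (t+ε)^n = (t+ε)^(k-1) * (t+ε)^(n+1-k) := by
      rw [← pow_add]; congr 1; omega
    have hpow2 : t^k = t^(k-1) * t := by
      rw [← pow_succ]; congr 1; omega
    rw [← hc, hKdef, e1, e2, e3, e4, div_pow, hpow1, hpow2]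
    have h5 : (t+ε) ≠ 0 := hta.ne'
    have h6 : t ≠ 0 := ht.ne'
    field_simp
  have hφpos : ∀ t : ℝ, 0 < t → 0 < φ t := by
    intro t ht
    have hta : (0:ℝ) < t + ε := by linarith
    rw [hφeq]
    positivity
  -- derivative of φ
  have hφd : ∀ t : ℝ, 0 < t → HasDerivAt φ (φ t * L t) t := by
    intro t ht
    have hta : (0:ℝ) < t + ε := by linarith
    have h1 : HasDerivAt (fun s : ℝ => (s+ε)^m) ((m:ℝ) * (t+ε)^(m-1)) t := by
      have := (hasDerivAt_zpow m (t+ε) (Or.inl hta.ne')).comp t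
        ((hasDerivAt_id t).add_const ε)
      simpa [Function.comp_def] using this
    have h2 := hasDerivAt_zpow (-(k:ℤ)) t (Or.inl ht.ne')
    have h3 := ((h1.mul h2).const_mul (K * ε))
    have hfun : (fun t : ℝ => K * ε * ((t+ε)^m * t^(-(k:ℤ)))) = φ := by
      funext s; rw [hφeq]
    simp only [Pi.mul_apply] at h3
    rw [hfun] at h3
    refine h3.congr_deriv ?_
    rw [hφeq, hLeq]
    rw [zpow_sub_one₀ hta.ne' m, zpow_sub_one₀ ht.ne' (-(k:ℤ))]
    push_cast
    field_simp
    ring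
  -- derivative of L
  have hLd : ∀ t : ℝ, 0 < t → HasDerivAt L (L' t) t := by
    intro t ht
    have hta : (0:ℝ) < t + ε := by linarith
    have h1 : HasDerivAt (fun s : ℝ => (m:ℝ)/(s+ε)) ((m:ℝ) * (-1/(t+ε)^2)) t := by
      have := (((hasDerivAt_id t).add_const ε).inv hta.ne').const_mul (m:ℝ)
      simp only [div_eq_mul_inv]
      refine this.congr_deriv ?_
      simp only [id_eq]; ring
    have h2 : HasDerivAt (fun s : ℝ => (k:ℝ)/s) ((k:ℝ) * (-(t^2)⁻¹)) t := by
      have := (hasDerivAt_inv ht.ne').const_mul (k:ℝ)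
      simp only [div_eq_mul_inv]
      exact this
    have h3 := h1.sub h2
    have hfun : (fun s : ℝ => (m:ℝ)/(s+ε) - (k:ℝ)/s) = L := by
      funext s; rw [hLeq]
    simp only [Pi.sub_def] at h3
    rw [hfun] at h3
    rw [hL'eq]
    exact h3
  -- bounds
  have hm_neg : (m:ℝ) ≤ 0 := by
    rw [hm]; push_cast
    have h1 : (2*k:ℝ) < n := by exact_mod_cast hn
    have h2 : (k:ℝ) ≥ 1 := by exact_mod_cast hk
    linarith
  have hre : (1:ℝ) ≤ r + ε := by linarith
  have hra : (0:ℝ) < r + ε := by linarith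
  have hu1 : (r+ε)⁻¹ ≤ 1 := by rw [inv_le_one_iff₀]; right; exact hre
  have hu1' : (0:ℝ) < (r+ε)⁻¹ := by positivity
  have hu2 : r⁻¹ ≤ 1 := by rw [inv_le_one_iff₀]; right; exact hx
  have hu2' : (0:ℝ) < r⁻¹ := by positivity
  have hk0 : (0:ℝ) ≤ (k:ℝ) := by positivity
  have hLr_le : L r ≤ 0 := by
    rw [hLeq]
    simp only [div_eq_mul_inv]
    have h1 : (m:ℝ) * (r+ε)⁻¹ ≤ 0 := mul_nonpos_of_nonpos_of_nonneg hm_neg hu1'.le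
    have h2 : (0:ℝ) ≤ (k:ℝ) * r⁻¹ := by positivity
    linarith
  have hLr_ge : -(((n:ℝ))+1) ≤ L r := by
    rw [hLeq]
    simp only [div_eq_mul_inv]
    have h1 : (m:ℝ) * 1 ≤ (m:ℝ) * (r+ε)⁻¹ := mul_le_mul_of_nonpos_left hu1 hm_neg
    have h2 : (k:ℝ) * r⁻¹ ≤ (k:ℝ) := mul_le_of_le_one_right hk0 hu2
    have h3 : -(((n:ℝ))+1) ≤ (m:ℝ) - k := by
      rw [hm]; push_cast
      linarith
    linarith
  have hL'r_ge : (0:ℝ) ≤ L' r := by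
    rw [hL'eq]
    have h1 : (0:ℝ) ≤ (-(m:ℝ)) * ((r+ε)^2)⁻¹ := mul_nonneg (by linarith) (by positivity)
    have h2 : (0:ℝ) ≤ (k:ℝ) * (r^2)⁻¹ := by positivity
    have e : (m:ℝ) * (-1/(r+ε)^2) - (k:ℝ) * (-(r^2)⁻¹)
        = (-(m:ℝ)) * ((r+ε)^2)⁻¹ + (k:ℝ) * (r^2)⁻¹ := by ring
    rw [e]
    linarith
  have hL'r_le : L' r ≤ (n:ℝ)+1 := by
    rw [hL'eq]
    have hv1' : ((r+ε)^2)⁻¹ ≤ 1 := by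
      rw [inv_le_one_iff₀]; right; nlinarith
    have hv1 : (0:ℝ) < ((r+ε)^2)⁻¹ := by positivity
    have hv2' : (r^2)⁻¹ ≤ 1 := by
      rw [inv_le_one_iff₀]; right; nlinarith
    have hv2 : (0:ℝ) < (r^2)⁻¹ := by positivity
    have h2 : -(m:ℝ) ≤ (n:ℝ)+1-k := by
      rw [hm]; push_cast; linarith
    have e : (m:ℝ) * (-1/(r+ε)^2) - (k:ℝ) * (-(r^2)⁻¹)
        = (-(m:ℝ)) * ((r+ε)^2)⁻¹ + (k:ℝ) * (r^2)⁻¹ := by ring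
    rw [e]
    have h3 : (-(m:ℝ)) * ((r+ε)^2)⁻¹ ≤ -(m:ℝ) := mul_le_of_le_one_right (by linarith) hv1'
    have h4 : (k:ℝ) * (r^2)⁻¹ ≤ (k:ℝ) := mul_le_of_le_one_right hk0 hv2'
    linarith
  -- FDeriv of f at nonzero points
  obtain ⟨c0, hc0eq⟩ : ∃ c0 : ℝ → ℝ, ∀ t, c0 t = φ t * L t * t⁻¹ := ⟨_, fun _ => rfl⟩
  have hFy : ∀ y : EuclideanSpace ℝ (Fin n), y ≠ 0 →
      HasFDerivAt f ((c0 ‖y‖) • innerSL ℝ y) y := by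
    intro y hy
    have ht : (0:ℝ) < ‖y‖ := norm_pos_iff.mpr hy
    have h1 := (hφd ‖y‖ ht).comp_hasFDerivAt y (hasFDerivAt_norm' hy)
    have hev : f =ᶠ[𝓝 y] (φ ∘ fun z : EuclideanSpace ℝ (Fin n) => ‖z‖) := by
      filter_upwards [eventually_ne_nhds hy] with z hz
      exact hfφ z hz
    have h2 := h1.congr_of_eventuallyEq hev
    have e : (φ ‖y‖ * L ‖y‖) • (‖y‖⁻¹ • innerSL ℝ y) = (c0 ‖y‖) • innerSL ℝ y := by
      rw [smul_smul, hc0eq]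
    rwa [e] at h2
  have hfx : f x = φ r := by rw [hfφ x hx0, ← hr]
  -- gradient
  have hgrad : gradient f x = (c0 r) • x := by
    have hg : HasGradientAt f ((c0 r) • x) x := by
      rw [hasGradientAt_iff_hasFDerivAt]
      have h := hFy x hx0
      rw [← hr] at h
      refine h.congr_fderiv ?_
      ext v
      simp [InnerProductSpace.toDual_apply_apply, real_inner_smul_left]
    exact hg.gradient
  have hφr := hφpos r hr0
  constructor
  · have hb : ‖gradient f x‖ ≤ ((n:ℝ)+1) * φ r := by
      rw [hgrad, norm_smul, Real.norm_eq_abs, ← hr, hc0eq, abs_mul, abs_mul,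
        abs_of_pos hφr, abs_of_nonpos hLr_le, abs_of_pos hu2']
      have e : φ r * -L r * r⁻¹ * r = φ r * -L r := by field_simp
      rw [e]
      have h := mul_le_mul_of_nonneg_left (show -(L r) ≤ (n:ℝ)+1 by linarith) hφr.le
      linarith
    rw [hfx]
    have hfin : ((n:ℝ)+1) * φ r ≤ 3 * ((n:ℝ)+1)^2 * φ r := by
      have h1 : ((n:ℝ)+1) ≤ 3*((n:ℝ)+1)^2 := by nlinarith [Nat.cast_nonneg (α := ℝ) n]
      exact mul_le_mul_of_nonneg_right h1 hφr.le
    linarith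
  · -- Laplacian part
    obtain ⟨dd, hddeq⟩ : ∃ d : ℝ,
        d = (φ r * L r * L r + φ r * L' r) * r⁻¹ + φ r * L r * (-(r^2)⁻¹) := ⟨_, rfl⟩
    have hc0d : HasDerivAt c0 dd ‖x‖ := by
      have h := ((hφd r hr0).mul (hLd r hr0)).mul (hasDerivAt_inv hr0.ne')
      have hfun : (fun t : ℝ => φ t * L t * t⁻¹) = c0 := by funext t; rw [hc0eq]
      simp only [Pi.mul_def] at h
      rw [hfun] at h
      rw [← hr, hddeq]
      exact h
    have hcF : HasFDerivAt (fun y : EuclideanSpace ℝ (Fin n) => c0 ‖y‖)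
        (dd • (‖x‖⁻¹ • innerSL ℝ x)) x :=
      hc0d.comp_hasFDerivAt x (hasFDerivAt_norm' hx0)
    obtain ⟨V, hV⟩ : ∃ V : EuclideanSpace ℝ (Fin n) →L[ℝ] (EuclideanSpace ℝ (Fin n) →L[ℝ] ℝ),
        V = innerSL ℝ := ⟨innerSL ℝ, rfl⟩
    have hF1 : HasFDerivAt (fun y : EuclideanSpace ℝ (Fin n) => c0 ‖y‖ • V y)
        ((c0 ‖x‖) • V + (dd • (‖x‖⁻¹ • innerSL ℝ x)).smulRight (V x)) x :=
      hcF.smul V.hasFDerivAt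
    have hfd : fderiv ℝ f =ᶠ[𝓝 x]
        (fun y : EuclideanSpace ℝ (Fin n) => c0 ‖y‖ • V y) := by
      filter_upwards [eventually_ne_nhds hx0] with y hy
      rw [hV]
      exact (hFy y hy).fderiv
    have hfd2 : fderiv ℝ (fderiv ℝ f) x
        = (c0 ‖x‖) • V + (dd • (‖x‖⁻¹ • innerSL ℝ x)).smulRight (V x) := by
      rw [hfd.fderiv_eq, hF1.fderiv]
    have hterm : ∀ i : Fin n, hess f x i i = c0 ‖x‖ + dd * ‖x‖⁻¹ * (x i * x i) := by
      intro i
      show iteratedFDeriv ℝ 2 f x ![EuclideanSpace.single i 1, EuclideanSpace.single i 1] = _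
      rw [iteratedFDeriv_two_apply, hfd2, hV]
      simp only [ContinuousLinearMap.add_apply, ContinuousLinearMap.smul_apply,
        ContinuousLinearMap.smulRight_apply, innerSL_apply_apply, Matrix.cons_val_zero,
        Matrix.cons_val_one, Matrix.head_cons, EuclideanSpace.inner_single_left,
        EuclideanSpace.inner_single_right, EuclideanSpace.single_apply, smul_eq_mul,
        RCLike.inner_apply, conj_trivial, map_one, one_mul, if_pos rfl, if_true]
      rw [show ((innerSL ℝ) x) (EuclideanSpace.single i (1:ℝ)) = x i from by
        simp [EuclideanSpace.inner_single_right]]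
      rw [show ((innerSL ℝ) (EuclideanSpace.single i (1:ℝ))) (EuclideanSpace.single i (1:ℝ)) = 1 from by
        simp [EuclideanSpace.inner_single_left]]
      ring
    have hsum : (∑ i, x i * x i) = r^2 := by
      have h := @real_inner_self_eq_norm_sq (EuclideanSpace ℝ (Fin n)) _ _ x
      rw [PiLp.inner_apply] at h
      simp only [RCLike.inner_apply, conj_trivial] at h
      rw [hr]; exact h
    have hΔ : ∑ i, hess f x i i
        = φ r * (L r * L r) + φ r * L' r + ((n:ℝ)-1) * (φ r * (L r * r⁻¹)) := by
      have h1 : ∑ i, hess f x i i = ∑ i : Fin n, (c0 ‖x‖ + dd * ‖x‖⁻¹ * (x i * x i)) :=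
        Finset.sum_congr rfl (fun i _ => hterm i)
      rw [h1, Finset.sum_add_distrib, Finset.sum_const, ← Finset.mul_sum, hsum,
        Finset.card_univ, Fintype.card_fin, ← hr, hc0eq, hddeq]
      have hr0' : r ≠ 0 := hr0.ne'
      field_simp
      rw [nsmul_eq_mul, mul_div_assoc', mul_div_assoc', mul_div_cancel_left₀ _ hr0']
      ring
    rw [hΔ, hfx]
    have h1 : 0 ≤ φ r * (L r * L r) := mul_nonneg hφr.le (mul_self_nonneg _)
    have h2 : 0 ≤ φ r * L' r := mul_nonneg hφr.le hL'r_ge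
    have hw : -(((n:ℝ))+1) ≤ L r * r⁻¹ := by
      have h := mul_le_mul_of_nonpos_left hu2 hLr_le
      linarith
    have hn1 : (0:ℝ) ≤ (n:ℝ)-1 := by
      have h3 : (3:ℝ) ≤ (n:ℝ) := by exact_mod_cast (show 3 ≤ n by omega)
      linarith
    have h3 : ((n:ℝ)-1) * (φ r * (-(((n:ℝ))+1))) ≤ ((n:ℝ)-1) * (φ r * (L r * r⁻¹)) :=
      mul_le_mul_of_nonneg_left (mul_le_mul_of_nonneg_left hw hφr.le) hn1
    have h4 : -(3*((n:ℝ)+1)^2 * φ r) ≤ ((n:ℝ)-1) * (φ r * (-(((n:ℝ))+1))) := by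
      nlinarith [hφr.le, mul_nonneg hφr.le (Nat.cast_nonneg (α := ℝ) n),
        mul_nonneg (mul_nonneg hφr.le (Nat.cast_nonneg (α := ℝ) n)) (Nat.cast_nonneg (α := ℝ) n)]
    linarith
end
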